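/- arXiv:1104.3917 — 8 statements merged into one kernel-verified Lean document; each statement's English description precedes it below -/
import Mathlib

section
/- For every natural number k, the class of k-threshold graphs is characterized by a finite collection of forbidden induced subgraphs: there exists a finite set F of finite simple graphs such that a finite simple graph G is a k-threshold graph if and only if no graph in F is isomorphic to an induced subgraph of G. -/
/-!
Listing the vertices of a `k`-threshold graph in an elimination order and recording, for each
vertex, its color and the color of its later neighbours (if it has any) turns the graph into a
word over the finite alphabet `Fin k × Option (Fin k)`. A minimal non-`k`-threshold graph is a
`k`-threshold graph plus one vertex, i.e. a word whose letters are additionally marked by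
adjacency to that vertex. By Higman's lemma, in any infinite sequence of marked words one is a
subword of a later one, which gives an induced embedding between the corresponding minimal
obstructions. Such an embedding must be onto, so minimal obstructions have bounded size, and the
non-`k`-threshold graphs up to that size form a finite list of forbidden induced subgraphs.
-/

/-- `G` is a `k`-threshold graph: there is a coloring of the vertices with `k` colors
such that every nonempty vertex subset `W` contains a vertex `x` which is either
isolated in `W`, or whose neighbors inside `W` are exactly the vertices of `W \ {x}`
of some color `i`. -/
def IsKThreshold {V : Type*} (k : ℕ) (G : SimpleGraph V) : Prop :=
  ∃ c : V → Fin k, ∀ W : Set V, W.Nonempty →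
    ∃ x ∈ W, (∀ y ∈ W, ¬ G.Adj x y) ∨
      ∃ i : Fin k, ∀ y ∈ W, y ≠ x → (G.Adj x y ↔ c y = i)

open SimpleGraph

universe u v

variable {k : ℕ} {V : Type u} {W : Type v}

def SimpleGraph.IsKThresholdColoring (G : SimpleGraph V) (c : V → Fin k) : Prop :=
  ∀ W : Set V, W.Nonempty → ∃ x ∈ W, (∀ y ∈ W, ¬ G.Adj x y) ∨
    ∃ i : Fin k, ∀ y ∈ W, y ≠ x → (G.Adj x y ↔ c y = i)

theorem SimpleGraph.IsKThresholdColoring.comp_embedding {G : SimpleGraph V}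
    {H : SimpleGraph W} {c : V → Fin k} (hc : G.IsKThresholdColoring c) (f : H ↪g G) :
    H.IsKThresholdColoring (c ∘ f) := by
  intro S hS
  obtain ⟨_, ⟨x, hx, rfl⟩, hfx⟩ := hc (f '' S) (hS.image f)
  refine ⟨x, hx, ?_⟩
  rcases hfx with hfx | ⟨i, hfx⟩
  · exact .inl fun y hy => by simpa using hfx (f y) ⟨y, hy, rfl⟩
  · exact .inr ⟨i, fun y hy hyx => by simpa using hfx (f y) ⟨y, hy, rfl⟩ (f.injective.ne hyx)⟩

theorem IsKThreshold.of_embedding {G : SimpleGraph V} {H : SimpleGraph W}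
    (hG : IsKThreshold k G) (f : H ↪g G) : IsKThreshold k H :=
  let ⟨c, hc⟩ := hG
  ⟨c ∘ f, IsKThresholdColoring.comp_embedding hc f⟩

theorem isKThreshold_of_isEmpty [IsEmpty V] (G : SimpleGraph V) : IsKThreshold k G :=
  ⟨isEmptyElim, fun _ ⟨x, _⟩ => isEmptyElim x⟩

/-- A letter `(color, attachment)`: the attachment is the color of the later neighbours, or
`none` when there are none. -/
abbrev ThresholdLetter (k : ℕ) := Fin k × Option (Fin k)

def wordGraph {ι : Type*} [LinearOrder ι] (w : ι → ThresholdLetter k) : SimpleGraph ι where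
  Adj p q := (p < q ∧ (w p).2 = some (w q).1) ∨ (q < p ∧ (w q).2 = some (w p).1)
  symm := ⟨fun _ _ => Or.symm⟩
  loopless := ⟨fun p h => by rcases h with ⟨h, -⟩ | ⟨h, -⟩ <;> exact lt_irrefl p h⟩

def wordGraphEmbedding {ι κ : Type*} [LinearOrder ι] [LinearOrder κ] (f : ι ↪o κ)
    {w₁ : ι → ThresholdLetter k} {w₂ : κ → ThresholdLetter k} (hw : ∀ p, w₂ (f p) = w₁ p) :
    wordGraph w₁ ↪g wordGraph w₂ where
  toEmbedding := f.toEmbedding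
  map_rel_iff' {p q} := by simp [wordGraph, hw]

def SimpleGraph.addVertex (G : SimpleGraph V) (s : Set V) : SimpleGraph (Option V) where
  Adj
    | none, none => False
    | none, some v => v ∈ s
    | some u, none => u ∈ s
    | some u, some v => G.Adj u v
  symm := ⟨by rintro (_ | u) (_ | v) h <;> simp_all [G.adj_comm]⟩
  loopless := ⟨by rintro (_ | u) h <;> simp_all⟩

namespace SimpleGraph

variable {G : SimpleGraph V} {H : SimpleGraph W} {s : Set V}

@[simp] theorem addVertex_adj_none_some {v : V} :
    (G.addVertex s).Adj none (some v) ↔ v ∈ s := .rfl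

@[simp] theorem addVertex_adj_some_none {v : V} :
    (G.addVertex s).Adj (some v) none ↔ v ∈ s := .rfl

@[simp] theorem addVertex_adj_some_some {u v : V} :
    (G.addVertex s).Adj (some u) (some v) ↔ G.Adj u v := .rfl

def Embedding.addVertex (f : G ↪g H) {t : Set W} (hst : ∀ v, v ∈ s ↔ f v ∈ t) :
    G.addVertex s ↪g H.addVertex t where
  toEmbedding := f.toEmbedding.optionMap
  map_rel_iff' {a b} := by
    rcases a with _ | u <;> rcases b with _ | v <;> simp [hst]

def Iso.addVertex (e : G ≃g H) {t : Set W} (hst : ∀ v, v ∈ s ↔ e v ∈ t) :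
    G.addVertex s ≃g H.addVertex t where
  toEquiv := e.toEquiv.optionCongr
  map_rel_iff' {a b} := by
    rcases a with _ | u <;> rcases b with _ | v <;> simp [hst, e.map_adj_iff]

def addVertexInduceComplIso [DecidableEq V] (G : SimpleGraph V) (v : V) :
    (G.induce {v}ᶜ).addVertex {u | G.Adj v u} ≃g G where
  toEquiv := Equiv.optionSubtypeNe v
  map_rel_iff' {a b} := by
    rcases a with _ | u <;> rcases b with _ | w <;> simp [G.adj_comm] <;> rfl

@[simp] theorem addVertexInduceComplIso_symm_apply_self [DecidableEq V] (G : SimpleGraph V)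
    (v : V) : (G.addVertexInduceComplIso v).symm v = none :=
  Equiv.optionSubtypeNe_symm_self v

@[simp] theorem addVertexInduceComplIso_symm_apply_of_ne [DecidableEq V] (G : SimpleGraph V)
    {u v : V} (h : u ≠ v) : (G.addVertexInduceComplIso v).symm u = some ⟨u, h⟩ :=
  Equiv.optionSubtypeNe_symm_of_ne h

end SimpleGraph

def wordGraphConsIso {n : ℕ} (a : ThresholdLetter k) (w : Fin n → ThresholdLetter k) :
    wordGraph (Fin.cons a w : Fin (n + 1) → _) ≃g
      (wordGraph w).addVertex {p | a.2 = some (w p).1} where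
  toEquiv := finSuccEquiv n
  map_rel_iff' {p q} := by
    cases p using Fin.cases <;> cases q using Fin.cases <;> simp [wordGraph, Fin.succ_pos]

@[simp] theorem wordGraphConsIso_symm_apply {n : ℕ} (a : ThresholdLetter k)
    (w : Fin n → ThresholdLetter k) (p : Option (Fin n)) :
    (wordGraphConsIso a w).symm p = (finSuccEquiv n).symm p := rfl

theorem card_compl_singleton_lt [Finite V] (x : V) : Nat.card ↥({x}ᶜ : Set V) < Nat.card V :=
  Finite.card_subtype_lt (p := (· ∈ ({x}ᶜ : Set V))) (x := x) (by simp)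

theorem SimpleGraph.IsKThresholdColoring.exists_iso_wordGraph [Finite V] {G : SimpleGraph V}
    {c : V → Fin k} (hc : G.IsKThresholdColoring c) :
    ∃ (n : ℕ) (w : Fin n → ThresholdLetter k) (e : G ≃g wordGraph w), ∀ v, (w (e v)).1 = c v := by
  classical
  induction hn : Nat.card V using Nat.strong_induction_on generalizing V with
  | _ m ih =>
  rcases isEmpty_or_nonempty V with hV | hV
  · exact ⟨0, Fin.elim0, ⟨Equiv.equivOfIsEmpty V (Fin 0), fun {u} => isEmptyElim u⟩, isEmptyElim⟩
  obtain ⟨x, -, hx⟩ := hc Set.univ Set.univ_nonempty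
  obtain ⟨att, hatt⟩ : ∃ att : Option (Fin k), ∀ y, y ≠ x → (G.Adj x y ↔ att = some (c y)) := by
    rcases hx with hx | ⟨i, hx⟩
    · exact ⟨none, fun y _ => by simp [hx y trivial]⟩
    · exact ⟨some i, fun y hy => by simp [hx y trivial hy, eq_comm]⟩
  obtain ⟨n, w, e, hw⟩ := ih _ (hn ▸ card_compl_singleton_lt x)
    (hc.comp_embedding (Embedding.induce _)) rfl
  have hN : ∀ u : ↥({x}ᶜ : Set V), G.Adj x u ↔ e u ∈ {p | att = some (w p).1} := fun u => by
    simp [hw, hatt u u.2]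
  refine ⟨n + 1, Fin.cons (c x, att) w, (G.addVertexInduceComplIso x).symm.trans
    ((e.addVertex hN).trans (wordGraphConsIso (c x, att) w).symm), fun v => ?_⟩
  by_cases hv : v = x
  · simp [hv, Iso.addVertex]
  · simpa [hv, Iso.addVertex] using hw ⟨v, hv⟩

def IsMinimalNonKThreshold (k : ℕ) (G : SimpleGraph V) : Prop :=
  ¬ IsKThreshold k G ∧ ∀ v, IsKThreshold k (G.induce {v}ᶜ)

theorem exists_isMinimalNonKThreshold_embedding [Finite V] {G : SimpleGraph V}
    (hG : ¬ IsKThreshold k G) : ∃ (B : Type u) (_ : Finite B) (H : SimpleGraph B),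
      IsMinimalNonKThreshold k H ∧ Nonempty (H ↪g G) := by
  induction hn : Nat.card V using Nat.strong_induction_on generalizing V with
  | _ m ih =>
  by_cases hmin : ∀ v, IsKThreshold k (G.induce {v}ᶜ)
  · exact ⟨V, ‹_›, G, ⟨hG, hmin⟩, ⟨Embedding.refl⟩⟩
  obtain ⟨v, hv⟩ := not_forall.mp hmin
  obtain ⟨B, _, H, hH, ⟨f⟩⟩ := ih _ (hn ▸ card_compl_singleton_lt v) hv rfl
  exact ⟨B, ‹_›, H, hH, ⟨(Embedding.induce _).comp f⟩⟩

theorem IsMinimalNonKThreshold.surjective_of_embedding {G : SimpleGraph V} {H : SimpleGraph W}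
    (hH : IsMinimalNonKThreshold k H) (hG : ¬ IsKThreshold k G) (f : G ↪g H) :
    Function.Surjective f := by
  intro v
  by_contra! hv
  exact hG ((hH.2 v).of_embedding (f.codRestrict {v}ᶜ hv))

theorem IsMinimalNonKThreshold.exists_iso_addVertex_wordGraph [Finite V] {G : SimpleGraph V}
    (hG : IsMinimalNonKThreshold k G) : ∃ (n : ℕ) (w : Fin n → ThresholdLetter k)
      (t : Set (Fin n)), Nonempty (G ≃g (wordGraph w).addVertex t) := by
  classical
  obtain ⟨v⟩ : Nonempty V := not_isEmpty_iff.mp fun _ => hG.1 (isKThreshold_of_isEmpty G)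
  obtain ⟨c, hc⟩ : ∃ c : _ → Fin k, (G.induce {v}ᶜ).IsKThresholdColoring c := hG.2 v
  obtain ⟨n, w, e, -⟩ := hc.exists_iso_wordGraph
  exact ⟨n, w, e '' {u | G.Adj v u}, ⟨(G.addVertexInduceComplIso v).symm.trans
    (e.addVertex fun _ => e.injective.mem_set_image.symm)⟩⟩

theorem exists_lt_orderEmbedding_comp_eq {α : Type*} [Finite α] {m : ℕ → ℕ}
    (w : ∀ i, Fin (m i) → α) : ∃ i j, i < j ∧ ∃ f : Fin (m i) ↪o Fin (m j), w j ∘ f = w i := by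
  obtain ⟨i, j, hij, hsub⟩ := (Set.finite_univ.partiallyWellOrderedOn (r := (· = ·))
    ).partiallyWellOrderedOn_sublistForall₂ (· = ·)
    (fun i => ⟨List.ofFn (w i), fun _ _ => Set.mem_univ _⟩)
  obtain ⟨l, hl, hsub⟩ := List.sublistForall₂_iff.mp hsub
  rw [List.forall₂_eq_eq_eq] at hl
  subst hl
  obtain ⟨f, hf⟩ := List.sublist_iff_exists_fin_orderEmbedding_get_eq.mp hsub
  refine ⟨i, j, hij, ((Fin.castOrderIso List.length_ofFn.symm).toOrderEmbedding.trans f).trans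
    (Fin.castOrderIso List.length_ofFn).toOrderEmbedding, funext fun p => ?_⟩
  simpa [List.get_ofFn, Fin.cast] using (hf (Fin.cast List.length_ofFn.symm p)).symm

theorem exists_lt_nonempty_embedding_addVertex_wordGraph {n : ℕ → ℕ}
    (w : ∀ j, Fin (n j) → ThresholdLetter k) (t : ∀ j, Set (Fin (n j))) :
    ∃ i j, i < j ∧
      Nonempty ((wordGraph (w i)).addVertex (t i) ↪g (wordGraph (w j)).addVertex (t j)) := by
  obtain ⟨i, j, hij, f, hf⟩ := exists_lt_orderEmbedding_comp_eq fun j p => (w j p, p ∈ t j)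
  have hw : ∀ p, w j (f p) = w i p := fun p => congrArg Prod.fst (congrFun hf p)
  have ht : ∀ p, p ∈ t i ↔ f p ∈ t j := fun p => (congrArg Prod.snd (congrFun hf p)).to_iff.symm
  exact ⟨i, j, hij, ⟨(wordGraphEmbedding f hw).addVertex ht⟩⟩

theorem exists_lt_nonempty_embedding_of_isMinimalNonKThreshold {X : ℕ → Type u}
    [∀ j, Finite (X j)] {G : ∀ j, SimpleGraph (X j)} (hG : ∀ j, IsMinimalNonKThreshold k (G j)) :
    ∃ i j, i < j ∧ Nonempty (G i ↪g G j) := by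
  choose n w t e using fun j => (hG j).exists_iso_addVertex_wordGraph
  obtain ⟨i, j, hij, ⟨f⟩⟩ := exists_lt_nonempty_embedding_addVertex_wordGraph w t
  exact ⟨i, j, hij, ⟨(e j).some.symm.toEmbedding.comp (f.comp (e i).some.toEmbedding)⟩⟩

theorem exists_card_le_of_isMinimalNonKThreshold (k : ℕ) : ∃ N, ∀ (V : Type u) [Finite V]
    (G : SimpleGraph V), IsMinimalNonKThreshold k G → Nat.card V ≤ N := by
  let S : Set ℕ := {m | ∃ (V : Type u) (_ : Finite V) (G : SimpleGraph V),
    IsMinimalNonKThreshold k G ∧ Nat.card V = m}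
  suffices S.Finite by
    obtain ⟨N, hN⟩ := this.bddAbove
    exact ⟨N, fun V _ G hG => hN ⟨V, ‹_›, G, hG, rfl⟩⟩
  by_contra hS
  set s := Set.Infinite.natEmbedding S hS
  choose X _ G hG hcard using fun j => (s j).2
  obtain ⟨i, j, hij, ⟨f⟩⟩ := exists_lt_nonempty_embedding_of_isMinimalNonKThreshold hG
  have hf : Nat.card (X i) = Nat.card (X j) := Nat.card_congr
    (Equiv.ofBijective f ⟨f.injective, (hG j).surjective_of_embedding (hG i).1 f⟩)
  exact hij.ne (s.injective (Subtype.ext (by rw [← hcard, ← hcard, hf])))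

/-- For every natural number `k`, the class of `k`-threshold graphs is characterized by a
finite collection of forbidden induced subgraphs: there is a finite list `F` of finite
simple graphs such that a finite simple graph `G` is `k`-threshold iff no graph of `F`
is isomorphic to an induced subgraph of `G` (i.e. no graph of `F` embeds into `G`). -/
theorem kThreshold_finitely_many_obstructions (k : ℕ) :
    ∃ F : List ((n : ℕ) × SimpleGraph (Fin n)),
      ∀ (V : Type) [Fintype V] (G : SimpleGraph V),
        IsKThreshold k G ↔ ∀ H ∈ F, IsEmpty (H.2 ↪g G) := by
  obtain ⟨N, hN⟩ := exists_card_le_of_isMinimalNonKThreshold.{0} k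
  let S : Set ((n : ℕ) × SimpleGraph (Fin n)) := {H | H.1 ≤ N ∧ ¬ IsKThreshold k H.2}
  have hS : S.Finite := ((Set.finite_Iic N).biUnion fun n _ => Set.finite_range (Sigma.mk n)).subset
    fun H hH => Set.mem_biUnion hH.1 ⟨H.2, rfl⟩
  refine ⟨hS.toFinset.toList, fun V _ G => ⟨fun hG H hH => ⟨fun f => ?_⟩, fun hF => ?_⟩⟩
  · simp only [Finset.mem_toList, Set.Finite.mem_toFinset] at hH
    exact hH.2 (hG.of_embedding f)
  · by_contra hG
    obtain ⟨B, _, H, hH, ⟨f⟩⟩ := exists_isMinimalNonKThreshold_embedding hG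
    have := Fintype.ofFinite B
    let e := H.overFinIso Nat.card_eq_fintype_card.symm
    refine (hF ⟨_, H.overFin _⟩ ?_).false (f.comp e.symm.toEmbedding)
    simp only [Finset.mem_toList, Set.Finite.mem_toFinset]
    exact ⟨hN B H hH, fun h => hH.1 (h.of_embedding e.toEmbedding)⟩
end

section
/- Every special 2-threshold graph is distance-hereditary: for every induced subgraph H of a special 2-threshold graph G and every pair of vertices u, v lying in the same connected component of H, the distance between u and v in H equals their distance in G. -/
open SimpleGraph

/-- `G` is a special 2-threshold graph: there is a black-and-white coloring `c`
(white = `true`) and a linear ordering of the vertices (given by `e : Fin n ≃ V`) such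
that every vertex is either nonadjacent to all earlier vertices, or adjacent to exactly
the white earlier vertices. -/
def IsSpecial2Threshold {V : Type*} (G : SimpleGraph V) : Prop :=
  ∃ (n : ℕ) (e : Fin n ≃ V) (c : V → Bool), ∀ i : Fin n,
    (∀ j : Fin n, j < i → ¬ G.Adj (e i) (e j)) ∨
    (∀ j : Fin n, j < i → (G.Adj (e i) (e j) ↔ c (e j) = true))

section
variable {V : Type*} {G : SimpleGraph V} {n : ℕ} {e : Fin n ≃ V} {c : V → Bool}

variable (hst : ∀ i : Fin n,
    (∀ j : Fin n, j < i → ¬ G.Adj (e i) (e j)) ∨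
    (∀ j : Fin n, j < i → (G.Adj (e i) (e j) ↔ c (e j) = true)))

include hst

private lemma s2t_aux {x y : V} (hadj : G.Adj x y) (hlt : e.symm y < e.symm x) :
    c y = true ∧ ∀ z : V, e.symm z < e.symm x → c z = true → G.Adj x z := by
  rcases hst (e.symm x) with h1 | h2
  · exact absurd hadj (by simpa using h1 (e.symm y) hlt)
  · refine ⟨?_, ?_⟩
    · have h := h2 (e.symm y) hlt
      simp only [Equiv.apply_symm_apply] at h
      exact h.mp hadj
    · intro z hz hc
      have h := h2 (e.symm z) hz
      simp only [Equiv.apply_symm_apply] at h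
      exact h.mpr hc

/-- If `u < v` are nonadjacent, each has a neighbour in `s`, and they have a common
neighbour somewhere in `G`, then they have a common neighbour inside `s`. -/
private lemma s2t_cn {s : Set V} {u v nu nv x : V}
    (hlt : e.symm u < e.symm v) (hnadj : ¬ G.Adj u v)
    (hnu : nu ∈ s) (hanu : G.Adj u nu) (hnv : nv ∈ s) (hanv : G.Adj v nv)
    (hxu : G.Adj u x) (hxv : G.Adj v x) :
    ∃ w ∈ s, G.Adj u w ∧ G.Adj v w := by
  have hnev : e.symm nv ≠ e.symm v := e.symm.injective.ne (G.ne_of_adj hanv).symm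
  have hneu : e.symm nu ≠ e.symm u := e.symm.injective.ne (G.ne_of_adj hanu).symm
  rcases lt_or_gt_of_ne hnev with hv | hv
  · -- nv earlier than v : v is "full"
    have fullv := (s2t_aux hst hanv hv).2
    rcases lt_or_gt_of_ne hneu with hu | hu
    · have cnu := (s2t_aux hst hanu hu).1
      exact ⟨nu, hnu, hanu, fullv nu (hu.trans hlt) cnu⟩
    · have cu := (s2t_aux hst hanu.symm hu).1
      exact absurd (fullv u hlt cu).symm hnadj
  · -- v earlier than nv : v white, nv full
    have hfnv := s2t_aux hst hanv.symm hv
    have fullnv := hfnv.2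
    by_cases hcu : c u = true
    · exact ⟨nv, hnv, (fullnv u (hlt.trans hv) hcu).symm, hanv⟩
    · have hnex : e.symm x ≠ e.symm u := e.symm.injective.ne (G.ne_of_adj hxu).symm
      rcases lt_or_gt_of_ne hnex with hx | hx
      · -- x earlier than u, so x < v and v is full
        have fullv := (s2t_aux hst hxv (hx.trans hlt)).2
        rcases lt_or_gt_of_ne hneu with hu | hu
        · have cnu := (s2t_aux hst hanu hu).1
          exact ⟨nu, hnu, hanu, fullv nu (hu.trans hlt) cnu⟩
        · exact absurd (s2t_aux hst hanu.symm hu).1 hcu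
      · exact absurd (s2t_aux hst hxu.symm hx).1 hcu

/-- If `u < v` are nonadjacent, each has a neighbour in `s`, and they have no common
neighbour in `G`, then there is a path of length 3 between them inside `s`. -/
private lemma s2t_path {s : Set V} {u v nu nv : V}
    (hlt : e.symm u < e.symm v) (hnadj : ¬ G.Adj u v)
    (hnu : nu ∈ s) (hanu : G.Adj u nu) (hnv : nv ∈ s) (hanv : G.Adj v nv)
    (hnc : ∀ x, ¬ (G.Adj u x ∧ G.Adj v x)) :
    ∃ y ∈ s, ∃ a ∈ s, G.Adj u y ∧ G.Adj y a ∧ G.Adj a v := by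
  have hnev : e.symm nv ≠ e.symm v := e.symm.injective.ne (G.ne_of_adj hanv).symm
  have hneu : e.symm nu ≠ e.symm u := e.symm.injective.ne (G.ne_of_adj hanu).symm
  rcases lt_or_gt_of_ne hneu with hu | hu
  · have cnu := (s2t_aux hst hanu hu).1
    rcases lt_or_gt_of_ne hnev with hv | hv
    · have fullv := (s2t_aux hst hanv hv).2
      exact absurd ⟨hanu, fullv nu (hu.trans hlt) cnu⟩ (hnc nu)
    · have fullnv := (s2t_aux hst hanv.symm hv).2
      exact ⟨nu, hnu, nv, hnv, hanu,
        (fullnv nu (hu.trans (hlt.trans hv)) cnu).symm, hanv.symm⟩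
  · have cu := (s2t_aux hst hanu.symm hu).1
    rcases lt_or_gt_of_ne hnev with hv | hv
    · have fullv := (s2t_aux hst hanv hv).2
      exact absurd (fullv u hlt cu).symm hnadj
    · have fullnv := (s2t_aux hst hanv.symm hv).2
      exact absurd ⟨(fullnv u (hlt.trans hv) cu).symm, hanv⟩ (hnc nv)

end

/-- Special 2-threshold graphs are distance-hereditary: in every induced subgraph
`G.induce s`, the distance between any two vertices in the same connected component of the
induced subgraph equals their distance in `G`. -/
theorem special2Threshold_distanceHereditary {V : Type*} (G : SimpleGraph V)
    (h : IsSpecial2Threshold G) (s : Set V) (u v : s)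
    (huv : (G.induce s).Reachable u v) :
    (G.induce s).dist u v = G.dist u v := by
  obtain ⟨n, e, c, hst⟩ := h
  by_cases hne : u = v
  · subst hne; rw [SimpleGraph.dist_self, SimpleGraph.dist_self]
  have hne' : (u : V) ≠ (v : V) := Subtype.coe_injective.ne hne
  obtain ⟨p, hp⟩ := huv.exists_walk_length_eq_dist
  have hGr : G.Reachable ↑u ↑v := ⟨p.map (SimpleGraph.Embedding.induce s).toHom⟩
  -- `G.dist ≤ induced dist`
  have hle : G.dist ↑u ↑v ≤ (G.induce s).dist u v := by
    calc G.dist ↑u ↑v ≤ (p.map (SimpleGraph.Embedding.induce s).toHom).length :=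
          SimpleGraph.dist_le _
      _ = p.length := SimpleGraph.Walk.length_map _ _
      _ = (G.induce s).dist u v := hp
  by_cases hadj : G.Adj ↑u ↑v
  · have hadj' : (G.induce s).Adj u v := hadj
    rw [SimpleGraph.dist_eq_one_iff_adj.mpr hadj', SimpleGraph.dist_eq_one_iff_adj.mpr hadj]
  · -- nonadjacent case: get a neighbour of `u` and of `v` inside `s`
    have hd0 : G.dist ↑u ↑v ≠ 0 :=
      SimpleGraph.dist_ne_zero_iff_ne_and_reachable.mpr ⟨hne', hGr⟩
    have hd1 : G.dist ↑u ↑v ≠ 1 := fun h1 => hadj (SimpleGraph.dist_eq_one_iff_adj.mp h1)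
    have hpn : ¬ p.Nil := SimpleGraph.Walk.not_nil_of_ne hne
    have hqn : ¬ p.reverse.Nil := SimpleGraph.Walk.not_nil_of_ne (Ne.symm hne)
    set nu : s := p.getVert 1 with hnudef
    set nv : s := p.reverse.getVert 1 with hnvdef
    have hanu : G.Adj ↑u ↑nu := SimpleGraph.Walk.adj_snd hpn
    have hanv : G.Adj ↑v ↑nv := SimpleGraph.Walk.adj_snd hqn
    have hneidx : e.symm (u : V) ≠ e.symm (v : V) := e.symm.injective.ne hne'
    by_cases hx : ∃ x, G.Adj ↑u x ∧ G.Adj ↑v x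
    · obtain ⟨x, hxu, hxv⟩ := hx
      -- common neighbour inside s
      have hcns : ∃ w ∈ s, G.Adj ↑u w ∧ G.Adj ↑v w := by
        rcases lt_or_gt_of_ne hneidx with hlt | hlt
        · exact s2t_cn hst hlt hadj nu.2 hanu nv.2 hanv hxu hxv
        · obtain ⟨w, hw, h1, h2⟩ :=
            s2t_cn hst hlt (fun hh => hadj hh.symm) nv.2 hanv nu.2 hanu hxv hxu
          exact ⟨w, hw, h2, h1⟩
      obtain ⟨w, hw, hw1, hw2⟩ := hcns
      have hH2 : (G.induce s).dist u v ≤ 2 := by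
        simpa using SimpleGraph.dist_le
          (SimpleGraph.Walk.cons (show (G.induce s).Adj u ⟨w, hw⟩ from hw1)
            (SimpleGraph.Walk.cons (show (G.induce s).Adj ⟨w, hw⟩ v from hw2.symm)
              SimpleGraph.Walk.nil))
      omega
    · push_neg at hx
      have hnc : ∀ x, ¬ (G.Adj ↑u x ∧ G.Adj ↑v x) := fun x hh => hx x hh.1 hh.2
      -- distance in G is at least 3
      have hd2 : G.dist ↑u ↑v ≠ 2 := by
        intro h2
        obtain ⟨q, hq⟩ := hGr.exists_walk_length_eq_dist
        rw [h2] at hq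
        have h0 : (0 : ℕ) < q.length := by omega
        have h1 : (1 : ℕ) < q.length := by omega
        have a1 : G.Adj (q.getVert 0) (q.getVert 1) := q.adj_getVert_succ h0
        have a2 : G.Adj (q.getVert 1) (q.getVert 2) := q.adj_getVert_succ h1
        have hv2 : q.getVert 2 = (v : V) := by
          have := q.getVert_length
          rwa [hq] at this
        rw [q.getVert_zero] at a1
        rw [hv2] at a2
        exact hnc (q.getVert 1) ⟨a1, a2.symm⟩
      -- path of length 3 inside s
      have hpath : ∃ y ∈ s, ∃ a ∈ s, G.Adj ↑u y ∧ G.Adj y a ∧ G.Adj a ↑v := by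
        rcases lt_or_gt_of_ne hneidx with hlt | hlt
        · exact s2t_path hst hlt hadj nu.2 hanu nv.2 hanv hnc
        · obtain ⟨y, hy, a, ha, h1, h2, h3⟩ :=
            s2t_path hst hlt (fun hh => hadj hh.symm) nv.2 hanv nu.2 hanu
              (fun x hh => hnc x ⟨hh.2, hh.1⟩)
          exact ⟨a, ha, y, hy, h3.symm, h2.symm, h1.symm⟩
      obtain ⟨y, hy, a, ha, h1, h2, h3⟩ := hpath
      have hH3 : (G.induce s).dist u v ≤ 3 := by
        simpa using SimpleGraph.dist_le
          (SimpleGraph.Walk.cons (show (G.induce s).Adj u ⟨y, hy⟩ from h1)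
            (SimpleGraph.Walk.cons (show (G.induce s).Adj ⟨y, hy⟩ ⟨a, ha⟩ from h2)
              (SimpleGraph.Walk.cons (show (G.induce s).Adj ⟨a, ha⟩ v from h3)
                SimpleGraph.Walk.nil)))
      omega
end

section
/- Every special 2-threshold graph on at least one vertex has an isolated vertex, or a pendant vertex (a vertex with exactly one neighbor), or a pair of twin vertices x and y (two vertices such that every other vertex is adjacent to both of x and y or to neither of them). -/
/-- Every special 2-threshold graph on at least one vertex has an isolated vertex, or a
pendant vertex (a vertex with exactly one neighbor), or a pair of twin vertices `x ≠ y`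
(every other vertex is adjacent to both of `x, y` or to neither). -/
theorem special2Threshold_isolated_pendant_or_twins {V : Type*} (G : SimpleGraph V)
    (h : IsSpecial2Threshold G) (hV : Nonempty V) :
    (∃ x, ∀ y, ¬ G.Adj x y) ∨
    (∃ x y, G.Adj x y ∧ ∀ z, G.Adj x z → z = y) ∨
    (∃ x y, x ≠ y ∧ ∀ z, z ≠ x → z ≠ y → (G.Adj z x ↔ G.Adj z y)) := by
  classical
  obtain ⟨n, e, c, h⟩ := h
  by_contra H
  push_neg at H
  obtain ⟨H1, H2, H3⟩ := H
  -- key fact: a later vertex adjacent to an earlier vertex forces the earlier one white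
  have hA : ∀ i j : Fin n, j < i → G.Adj (e i) (e j) → c (e j) = true := by
    intro i j hj hadj
    rcases h i with h1 | h2
    · exact absurd hadj (h1 j hj)
    · exact (h2 j hj).mp hadj
  have hA' : ∀ i j : Fin n, j < i → G.Adj (e j) (e i) → c (e j) = true := by
    intro i j hj hadj
    exact hA i j hj hadj.symm
  -- the set of white positions
  set S : Finset (Fin n) := Finset.univ.filter (fun i => c (e i) = true) with hS
  have hmemS : ∀ i : Fin n, i ∈ S ↔ c (e i) = true := by
    intro i; simp [hS]
  -- some white exists
  have hSne : S.Nonempty := by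
    obtain ⟨y, hxy⟩ := H1 hV.some
    set x := hV.some with hx
    set i := e.symm x with hi
    set j := e.symm y with hj
    have hex : e i = x := e.apply_symm_apply x
    have hey : e j = y := e.apply_symm_apply y
    rcases lt_trichotomy i j with hlt | heq | hgt
    · refine ⟨i, (hmemS i).mpr ?_⟩
      apply hA j i hlt
      rw [hex, hey]; exact hxy.symm
    · exfalso
      apply hxy.ne
      rw [← hex, ← hey, heq]
    · refine ⟨j, (hmemS j).mpr ?_⟩
      apply hA i j hgt
      rw [hex, hey]; exact hxy
  -- w1 : the first white
  set w1 := S.min' hSne with hw1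
  have hw1S : w1 ∈ S := S.min'_mem hSne
  have hw1min : ∀ i ∈ S, w1 ≤ i := fun i hi => S.min'_le i hi
  -- there is a second white
  have hS' : (S.erase w1).Nonempty := by
    by_contra hS'
    have honly : ∀ i ∈ S, i = w1 := by
      intro i hi
      by_contra hne
      exact hS' ⟨i, Finset.mem_erase.mpr ⟨hne, hi⟩⟩
    obtain ⟨y, hwy⟩ := H1 (e w1)
    set j := e.symm y with hj
    have hey : e j = y := e.apply_symm_apply y
    have hadj : G.Adj (e j) (e w1) := by rw [hey]; exact hwy.symm
    obtain ⟨u, huadj, hune⟩ := H2 (e j) (e w1) hadj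
    set k := e.symm u with hk
    have heu : e k = u := e.apply_symm_apply u
    rcases lt_trichotomy k j with hlt | heq | hgt
    · have hc : c (e k) = true := hA j k hlt (by rw [heu]; exact huadj)
      have : k = w1 := honly k ((hmemS k).mpr hc)
      exact hune (by rw [← heu, this])
    · exact G.irrefl (by rw [← heu, heq, hey] at huadj; exact huadj)
    · have hc : c (e j) = true := hA k j hgt (by rw [heu]; exact huadj.symm)
      have : j = w1 := honly j ((hmemS j).mpr hc)
      have : y = e w1 := by rw [← hey, this]
      exact G.irrefl (this ▸ hwy)
  -- w2 : the second white
  set w2 := (S.erase w1).min' hS' with hw2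
  have hw2mem := (S.erase w1).min'_mem hS'
  have hw2S : w2 ∈ S := (Finset.mem_erase.mp hw2mem).2
  have hw2ne : w2 ≠ w1 := (Finset.mem_erase.mp hw2mem).1
  have hw2min : ∀ i ∈ S, i ≠ w1 → w2 ≤ i := by
    intro i hi hne
    exact (S.erase w1).min'_le i (Finset.mem_erase.mpr ⟨hne, hi⟩)
  have h12 : w1 < w2 := lt_of_le_of_ne (hw1min w2 hw2S) (Ne.symm hw2ne)
  -- no vertex strictly between w1 and w2 is adjacent to e w1
  have between : ∀ z : Fin n, w1 < z → z < w2 → ¬ G.Adj (e z) (e w1) := by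
    intro z hz1 hz2 hadj
    have hzS : z ∉ S := fun hzS =>
      absurd (hw2min z hzS (ne_of_gt hz1)) (not_le.mpr hz2)
    obtain ⟨u, huadj, hune⟩ := H2 (e z) (e w1) hadj
    set k := e.symm u with hk
    have heu : e k = u := e.apply_symm_apply u
    rcases lt_trichotomy k z with hlt | heq | hgt
    · have hc : c (e k) = true := hA z k hlt (by rw [heu]; exact huadj)
      have hkS : k ∈ S := (hmemS k).mpr hc
      have hkw1 : k = w1 := by
        by_contra hne
        exact absurd (hw2min k hkS hne) (not_le.mpr (lt_trans hlt hz2))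
      exact hune (by rw [← heu, hkw1])
    · exact G.irrefl (by rw [← heu, heq] at huadj; exact huadj)
    · have hc : c (e z) = true := hA k z hgt (by rw [heu]; exact huadj.symm)
      exact hzS ((hmemS z).mpr hc)
  -- e w1 and e w2 are twins: contradiction
  have hne : e w1 ≠ e w2 := fun hh => hw2ne (e.injective hh.symm)
  obtain ⟨u, hu1, hu2, hbad⟩ := H3 (e w1) (e w2) hne
  set k := e.symm u with hk
  have heu : e k = u := e.apply_symm_apply u
  have hk1 : k ≠ w1 := fun hh => hu1 (by rw [← heu, hh])
  have hk2 : k ≠ w2 := fun hh => hu2 (by rw [← heu, hh])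
  have hiff : G.Adj u (e w1) ↔ G.Adj u (e w2) := by
    rw [← heu]
    rcases lt_trichotomy k w1 with hlt | heq | hgt
    · apply iff_of_false
      · intro ha
        have hc : c (e k) = true := hA' w1 k hlt ha
        exact absurd (hw1min k ((hmemS k).mpr hc)) (not_le.mpr hlt)
      · intro ha
        have hc : c (e k) = true := hA' w2 k (lt_trans hlt h12) ha
        exact absurd (hw1min k ((hmemS k).mpr hc)) (not_le.mpr hlt)
    · exact absurd heq hk1
    · rcases lt_trichotomy k w2 with hlt2 | heq2 | hgt2
      · apply iff_of_false
        · exact between k hgt hlt2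
        · intro ha
          have hc : c (e k) = true := hA' w2 k hlt2 ha
          exact absurd (hw2min k ((hmemS k).mpr hc) hk1) (not_le.mpr hlt2)
      · exact absurd heq2 hk2
      · rcases h k with h1 | h2
        · exact iff_of_false (h1 w1 (lt_trans h12 hgt2)) (h1 w2 hgt2)
        · apply iff_of_true
          · exact (h2 w1 (lt_trans h12 hgt2)).mpr ((hmemS w1).mp hw1S)
          · exact (h2 w2 hgt2).mpr ((hmemS w2).mp hw2S)
  rcases hbad with ⟨ha, hb⟩ | ⟨ha, hb⟩
  · exact hb (hiff.mp ha)
  · exact ha (hiff.mpr hb)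
end

section
/- If a 2-threshold graph G has two connected components C1 and C2 each containing at least two vertices, then one of the subgraphs induced by C1 and C2 is a threshold graph and the other is a special 2-threshold graph. -/
/-- `G` is a threshold graph: every nonempty induced subgraph (given by a nonempty vertex
subset `W`) has a vertex that is isolated in it or universal in it. -/
def IsThreshold {V : Type*} (G : SimpleGraph V) : Prop :=
  ∀ W : Set V, W.Nonempty → ∃ x ∈ W,
    (∀ y ∈ W, ¬ G.Adj x y) ∨ (∀ y ∈ W, y ≠ x → G.Adj x y)

/-- `G` is a 2-threshold graph: there is a black-and-white coloring (white = `true`) such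
that every nonempty vertex subset `W` contains a vertex `x` which is isolated in `W`, or
whose neighbors inside `W` are exactly the white vertices of `W \ {x}`, or exactly the
black vertices of `W \ {x}`. -/
def Is2Threshold {V : Type*} (G : SimpleGraph V) : Prop :=
  ∃ c : V → Bool, ∀ W : Set V, W.Nonempty → ∃ x ∈ W,
    (∀ y ∈ W, ¬ G.Adj x y) ∨
    (∀ y ∈ W, y ≠ x → (G.Adj x y ↔ c y = true)) ∨
    (∀ y ∈ W, y ≠ x → (G.Adj x y ↔ c y = false))

/-
Fix a 2-threshold colouring. Two bichromatic edges in different components would form an induced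
2K₂ in which every vertex has a neighbour and two non-neighbours of different colours, so no vertex
could be the required witness. Hence one component `C` has only monochromatic edges, so it is
monochromatic, and on a monochromatic vertex set every witness is isolated or universal: `C`
induces a threshold graph. Let `uv` be an edge of `C`, of colour `κ`. For `W` inside the other
component, a witness of `W ∪ {u, v}` lying in `W` misses `u`, so it is isolated or adjacent exactly
to the vertices of colour `≠ κ`; a witness `u` or `v` forces all of `W` to have colour `≠ κ`.
Peeling off such witnesses, last vertex first, orders the other component as a special 2-threshold
graph in which "white" means "colour `≠ κ`".
-/

namespace SimpleGraph

variable {V : Type*} {G : SimpleGraph V}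

def IsPivot (G : SimpleGraph V) (p : V → Prop) (W : Set V) (x : V) : Prop :=
  (∀ y ∈ W, ¬ G.Adj x y) ∨ ∀ y ∈ W, y ≠ x → (G.Adj x y ↔ p y)

def HasPivots (G : SimpleGraph V) (p : V → Prop) : Prop :=
  ∀ W : Set V, W.Nonempty → ∃ x ∈ W, G.IsPivot p W x

def IsTwoThresholdColoring (G : SimpleGraph V) (c : V → Bool) : Prop :=
  ∀ W : Set V, W.Nonempty → ∃ x ∈ W, ∃ b, G.IsPivot (c · = b) W x

namespace IsPivot

variable {p q : V → Prop} {W W' : Set V} {x : V}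

lemma mono (h : G.IsPivot p W' x) (hW : W ⊆ W') : G.IsPivot p W x :=
  h.imp (fun h y hy => h y (hW hy)) (fun h y hy => h y (hW hy))

lemma congr (h : G.IsPivot p W x) (hpq : ∀ y ∈ W, y ≠ x → (p y ↔ q y)) : G.IsPivot q W x :=
  h.imp_right fun h y hy hyx => (h y hy hyx).trans (hpq y hy hyx)

lemma of_forall_not (h : G.IsPivot p W x) (hp : ∀ y ∈ W, y ≠ x → ¬ p y) : G.IsPivot q W x := by
  refine Or.inl fun y hy hxy => ?_
  have hyx := (G.ne_of_adj hxy).symm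
  rcases h with h | h
  · exact h y hy hxy
  · exact hp y hy hyx ((h y hy hyx).1 hxy)

variable {c : V → Bool} {b : Bool}

lemma color_ne {v y : V} (h : G.IsPivot (c · = b) W x) (hv : v ∈ W) (hxv : G.Adj x v)
    (hy : y ∈ W) (hyx : y ≠ x) (hxy : ¬ G.Adj x y) : c y ≠ c v := by
  rcases h with h | h
  · exact absurd hxv (h v hv)
  · rw [(h v hv (G.ne_of_adj hxv).symm).1 hxv]
    exact fun hcy => hxy ((h y hy hyx).2 hcy)

lemma color_eq {v y z : V} (h : G.IsPivot (c · = b) W x) (hv : v ∈ W) (hxv : G.Adj x v)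
    (hy : y ∈ W) (hyx : y ≠ x) (hxy : ¬ G.Adj x y)
    (hz : z ∈ W) (hzx : z ≠ x) (hxz : ¬ G.Adj x z) : c y = c z :=
  (Bool.eq_not_of_ne (h.color_ne hv hxv hy hyx hxy)).trans
    (Bool.eq_not_of_ne (h.color_ne hv hxv hz hzx hxz)).symm

lemma true_of_monochromatic {κ : Bool} (h : G.IsPivot (c · = b) W x) (hW : ∀ y ∈ W, c y = κ) :
    G.IsPivot (fun _ => True) W x := by
  by_cases hκ : κ = b
  · exact h.congr fun y hy _ => iff_of_true (by rw [hW y hy, hκ]) trivial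
  · exact h.of_forall_not fun y hy _ => by rw [hW y hy]; exact hκ

lemma color_ne_of_not_adj {z : V} (h : G.IsPivot (c · = b) W x) (hz : z ∈ W) (hzx : z ≠ x)
    (hxz : ¬ G.Adj x z) : G.IsPivot (c · ≠ c z) W x := by
  rcases h with h | h
  · exact Or.inl h
  · have hb : b = !c z := Bool.eq_not_of_ne fun hbz => hxz ((h z hz hzx).2 hbz.symm)
    exact IsPivot.congr (Or.inr h) fun y _ _ => hb ▸ Bool.eq_not_iff

end IsPivot

lemma HasPivots.isThreshold (h : G.HasPivots fun _ => True) : IsThreshold G := fun W hW =>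
  let ⟨x, hx, hpiv⟩ := h W hW
  ⟨x, hx, hpiv.imp_right fun h y hy hyx => (h y hy hyx).2 trivial⟩

lemma HasPivots.exists_ordering {p : V → Prop} (h : G.HasPivots p) (n : ℕ) (s : Finset V)
    (hs : s.card = n) : ∃ f : Fin n → V, Function.Injective f ∧ (∀ i, f i ∈ s) ∧
      ∀ i, G.IsPivot p (f '' Set.Iio i) (f i) := by
  classical
  induction n generalizing s with
  | zero => exact ⟨Fin.elim0, fun i => i.elim0, fun i => i.elim0, fun i => i.elim0⟩
  | succ n ih =>
    obtain ⟨x, hxs, hx⟩ := h s (by simpa using Finset.card_pos.1 (hs ▸ n.succ_pos))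
    obtain ⟨f, hf, hfs, hpiv⟩ := ih (s.erase x) (by simp [Finset.card_erase_of_mem hxs, hs])
    have hcast : ∀ {i j : Fin (n + 1)}, j < i → ∃ j' : Fin n, j'.castSucc = j := fun hj =>
      Fin.exists_castSucc_eq.2 (Fin.ne_last_of_lt hj)
    refine ⟨Fin.snoc f x, Fin.snoc_injective_iff.2 ⟨hf, ?_⟩, Fin.lastCases ?_ fun i => ?_,
      Fin.lastCases ?_ fun i => ?_⟩
    · rintro ⟨i, rfl⟩
      exact Finset.notMem_erase _ _ (hfs i)
    · simpa using hxs
    · simpa using Finset.mem_of_mem_erase (hfs i)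
    · rw [Fin.snoc_last]
      refine hx.mono ?_
      rintro _ ⟨j, hj, rfl⟩
      obtain ⟨j, rfl⟩ := hcast hj
      simpa using Finset.mem_of_mem_erase (hfs j)
    · rw [Fin.snoc_castSucc]
      refine (hpiv i).mono ?_
      rintro _ ⟨j, hj, rfl⟩
      obtain ⟨j, rfl⟩ := hcast hj
      exact ⟨j, Fin.castSucc_lt_castSucc_iff.1 hj, by simp⟩

lemma HasPivots.isSpecial2Threshold [Finite V] {p : V → Prop} (h : G.HasPivots p) :
    IsSpecial2Threshold G := by
  classical
  cases nonempty_fintype V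
  obtain ⟨f, hf, -, hpiv⟩ := h.exists_ordering _ Finset.univ Finset.card_univ
  have hbij : Function.Bijective f := (Fintype.bijective_iff_injective_and_card f).2 ⟨hf, by simp⟩
  refine ⟨_, Equiv.ofBijective f hbij, fun v => decide (p v), fun i => ?_⟩
  simp only [Equiv.ofBijective_apply, decide_eq_true_iff]
  exact (hpiv i).imp (fun h j hj => h _ ⟨j, hj, rfl⟩) fun h j hj => h _ ⟨j, hj, rfl⟩ (hf.ne hj.ne)

lemma hasPivots_induce {p : V → Prop} {S : Set V}
    (h : ∀ W ⊆ S, W.Nonempty → ∃ x ∈ W, G.IsPivot p W x) : (G.induce S).HasPivots fun y => p y := by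
  intro Z hZ
  obtain ⟨_, ⟨x, hx, rfl⟩, hpiv⟩ :=
    h (Subtype.val '' Z) (by rintro _ ⟨y, -, rfl⟩; exact y.2) (hZ.image _)
  refine ⟨x, hx, hpiv.imp (fun h y hy => h y ⟨y, hy, rfl⟩) fun h y hy hyx => ?_⟩
  exact h y ⟨y, hy, rfl⟩ (Subtype.val_injective.ne hyx)

namespace ConnectedComponent

variable {C C' : G.ConnectedComponent} {x y : V}

lemma not_adj_of_ne (hne : C ≠ C') (hx : x ∈ C.supp) (hy : y ∈ C'.supp) : ¬ G.Adj x y :=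
  fun hxy => hne (eq_of_common_vertex (C.mem_supp_of_adj_mem_supp hx hxy) hy)

lemma ne_of_ne (hne : C ≠ C') (hx : x ∈ C.supp) (hy : y ∈ C'.supp) : x ≠ y :=
  fun hxy => hne (eq_of_common_vertex hx (hxy ▸ hy))

lemma eq_of_forall_adj {α : Type*} {f : V → α} (h : ∀ x ∈ C.supp, ∀ y, G.Adj x y → f x = f y)
    (hx : x ∈ C.supp) (hy : y ∈ C.supp) : f x = f y := by
  obtain ⟨p⟩ := C.reachable_of_mem_supp hx hy
  induction p with
  | nil => rfl
  | cons hadj _ ih => exact (h _ hx _ hadj).trans (ih (C.mem_supp_of_adj_mem_supp hx hadj) hy)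

lemma exists_adj_of_nontrivial (h : C.supp.Nontrivial) : ∃ u ∈ C.supp, ∃ v, G.Adj u v := by
  have : Nontrivial C.supp := Set.nontrivial_coe_sort.2 h
  obtain ⟨u, hu⟩ := C.nonempty_supp
  obtain ⟨v, huv⟩ := C.connected_toSimpleGraph.preconnected.exists_adj_of_nontrivial ⟨u, hu⟩
  exact ⟨u, hu, v, huv⟩

end ConnectedComponent

namespace IsTwoThresholdColoring

variable {c : V → Bool} {W S : Set V} {κ : Bool}

lemma exists_isPivot_true (hc : G.IsTwoThresholdColoring c) (hW : W.Nonempty)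
    (hmono : ∀ y ∈ W, c y = κ) : ∃ x ∈ W, G.IsPivot (fun _ => True) W x :=
  let ⟨x, hx, _, hpiv⟩ := hc W hW
  ⟨x, hx, hpiv.true_of_monochromatic hmono⟩

lemma isThreshold_induce (hc : G.IsTwoThresholdColoring c) (hS : ∀ y ∈ S, c y = κ) :
    IsThreshold (G.induce S) :=
  (hasPivots_induce fun _ hWS hW => hc.exists_isPivot_true hW fun y hy => hS y (hWS hy)).isThreshold

lemma exists_isPivot_color_ne_of_adj {u v : V} (hc : G.IsTwoThresholdColoring c)
    (huv : G.Adj u v) (hcuv : c u = c v) (hW : W.Nonempty) (hWu : ∀ y ∈ W, ¬ G.Adj u y)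
    (hWv : ∀ y ∈ W, ¬ G.Adj v y) : ∃ x ∈ W, G.IsPivot (c · ≠ c u) W x := by
  have hyu : ∀ y ∈ W, y ≠ u := fun y hy hyu => hWv y hy (hyu ▸ huv.symm)
  have hyv : ∀ y ∈ W, y ≠ v := fun y hy hyv => hWu y hy (hyv ▸ huv)
  -- if `u` or `v` is the witness, all of `W` has the colour opposite to `c u`
  have of_avoid : (∀ y ∈ W, c y ≠ c u) → ∃ x ∈ W, G.IsPivot (c · ≠ c u) W x := fun hne =>
    let ⟨x, hx, hpiv⟩ := hc.exists_isPivot_true hW fun y hy => Bool.eq_not_of_ne (hne y hy)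
    ⟨x, hx, hpiv.congr fun y hy _ => iff_of_true trivial (hne y hy)⟩
  obtain ⟨x, hx, b, hpiv⟩ := hc (insert u (insert v W)) (Set.insert_nonempty _ _)
  rcases hx with rfl | rfl | hxW
  · exact of_avoid fun y hy => hcuv ▸
      hpiv.color_ne (by simp) huv (by simp [hy]) (hyu y hy) (hWu y hy)
  · exact of_avoid fun y hy =>
      hpiv.color_ne (by simp) huv.symm (by simp [hy]) (hyv y hy) (hWv y hy)
  · exact ⟨x, hxW, (hpiv.color_ne_of_not_adj (by simp) (hyu x hxW).symm
      fun hxu => hWu x hxW hxu.symm).mono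
      ((Set.subset_insert _ _).trans (Set.subset_insert _ _))⟩

lemma isSpecial2Threshold_induce [Finite V] {u v : V} (hc : G.IsTwoThresholdColoring c)
    (huv : G.Adj u v) (hcuv : c u = c v) (hSu : ∀ y ∈ S, ¬ G.Adj u y)
    (hSv : ∀ y ∈ S, ¬ G.Adj v y) : IsSpecial2Threshold (G.induce S) :=
  (hasPivots_induce fun _ hWS hW => hc.exists_isPivot_color_ne_of_adj huv hcuv hW
    (fun y hy => hSu y (hWS hy)) fun y hy => hSv y (hWS hy)).isSpecial2Threshold

open ConnectedComponent in
lemma color_eq_or_color_eq {C C' : G.ConnectedComponent} {a b a' b' : V}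
    (hc : G.IsTwoThresholdColoring c) (hne : C ≠ C') (ha : a ∈ C.supp) (hab : G.Adj a b)
    (ha' : a' ∈ C'.supp) (hab' : G.Adj a' b') : c a = c b ∨ c a' = c b' := by
  have hb := C.mem_supp_of_adj_mem_supp ha hab
  have hb' := C'.mem_supp_of_adj_mem_supp ha' hab'
  obtain ⟨x, hx, _, hpiv⟩ := hc {a, b, a', b'} (by simp)
  -- `x` has a neighbour in its own component and misses both ends of the other edge
  have key : ∀ {D D' : G.ConnectedComponent} {p q r : V}, D ≠ D' → x ∈ D.supp →
      p ∈ ({a, b, a', b'} : Set V) → G.Adj x p → q ∈ ({a, b, a', b'} : Set V) → q ∈ D'.supp →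
      r ∈ ({a, b, a', b'} : Set V) → r ∈ D'.supp → c q = c r :=
    fun hDD' hxD hp hxp hq hqD hr hrD =>
      hpiv.color_eq hp hxp hq (ne_of_ne hDD' hxD hqD).symm (not_adj_of_ne hDD' hxD hqD)
        hr (ne_of_ne hDD' hxD hrD).symm (not_adj_of_ne hDD' hxD hrD)
  rcases hx with rfl | rfl | rfl | rfl
  · exact Or.inr (key hne ha (by simp) hab (by simp) ha' (by simp) hb')
  · exact Or.inr (key hne hb (by simp) hab.symm (by simp) ha' (by simp) hb')
  · exact Or.inl (key hne.symm ha' (by simp) hab' (by simp) ha (by simp) hb)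
  · exact Or.inl (key hne.symm hb' (by simp) hab'.symm (by simp) ha (by simp) hb)

open ConnectedComponent in
lemma isThreshold_and_isSpecial2Threshold [Finite V] {C C' : G.ConnectedComponent}
    (hc : G.IsTwoThresholdColoring c) (hne : C ≠ C') (hC : C.supp.Nontrivial)
    (hmono : ∀ x ∈ C.supp, ∀ y, G.Adj x y → c x = c y) :
    IsThreshold (G.induce C.supp) ∧ IsSpecial2Threshold (G.induce C'.supp) := by
  obtain ⟨u, hu, v, huv⟩ := C.exists_adj_of_nontrivial hC
  have hv := C.mem_supp_of_adj_mem_supp hu huv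
  exact ⟨hc.isThreshold_induce fun y hy => C.eq_of_forall_adj hmono hy hu,
    hc.isSpecial2Threshold_induce huv (hmono u hu v huv)
      (fun _ => not_adj_of_ne hne hu) fun _ => not_adj_of_ne hne hv⟩

end IsTwoThresholdColoring

end SimpleGraph

lemma Is2Threshold.exists_isTwoThresholdColoring {V : Type*} {G : SimpleGraph V}
    (h : Is2Threshold G) : ∃ c, G.IsTwoThresholdColoring c := by
  obtain ⟨c, hc⟩ := h
  refine ⟨c, fun W hW => ?_⟩
  obtain ⟨x, hx, h | h | h⟩ := hc W hW
  exacts [⟨x, hx, true, Or.inl h⟩, ⟨x, hx, true, Or.inr h⟩, ⟨x, hx, false, Or.inr h⟩]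

/-- If a 2-threshold graph has two (distinct) connected components each containing at
least two vertices, then one of them induces a threshold graph and the other induces a
special 2-threshold graph. -/
theorem twoThreshold_two_nontrivial_components {V : Type*} [Fintype V]
    (G : SimpleGraph V) (h : Is2Threshold G) (C₁ C₂ : G.ConnectedComponent)
    (hne : C₁ ≠ C₂) (h₁ : C₁.supp.Nontrivial) (h₂ : C₂.supp.Nontrivial) :
    (IsThreshold (G.induce C₁.supp) ∧ IsSpecial2Threshold (G.induce C₂.supp)) ∨
    (IsThreshold (G.induce C₂.supp) ∧ IsSpecial2Threshold (G.induce C₁.supp)) := by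
  obtain ⟨c, hc⟩ := h.exists_isTwoThresholdColoring
  by_cases h₁mono : ∀ x ∈ C₁.supp, ∀ y, G.Adj x y → c x = c y
  · exact Or.inl (hc.isThreshold_and_isSpecial2Threshold hne h₁ h₁mono)
  · refine Or.inr (hc.isThreshold_and_isSpecial2Threshold hne.symm h₂ fun a' ha' b' hab' => ?_)
    push Not at h₁mono
    obtain ⟨a, ha, b, hab, hcab⟩ := h₁mono
    exact (hc.color_eq_or_color_eq hne ha hab ha' hab').resolve_left hcab
end

section
/- A finite simple graph G is good if and only if G contains no induced subgraph isomorphic to any of the following five graphs: the gem; the graph obtained from C4 + K1 (a 4-cycle plus one isolated vertex) by adding a universal vertex; the graph obtained from the butterfly by adding a universal vertex; the graph obtained from 3K2 by adding a universal vertex; and the graph obtained from the octahedron by adding a universal vertex. -/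
/-- `H` is the union of two threshold graphs: its vertex set is partitioned into two
nonempty parts with no edges between them, each inducing a threshold graph. -/
def IsUnionTwoThreshold {W : Type*} (H : SimpleGraph W) : Prop :=
  ∃ A B : Set W, A.Nonempty ∧ B.Nonempty ∧ A ∪ B = Set.univ ∧ Disjoint A B ∧
    (∀ a ∈ A, ∀ b ∈ B, ¬ H.Adj a b) ∧
    IsThreshold (H.induce A) ∧ IsThreshold (H.induce B)

/-- `H` is the join of two threshold graphs: its vertex set is partitioned into two
nonempty parts with all edges between them, each inducing a threshold graph. -/
def IsJoinTwoThreshold {W : Type*} (H : SimpleGraph W) : Prop :=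
  ∃ A B : Set W, A.Nonempty ∧ B.Nonempty ∧ A ∪ B = Set.univ ∧ Disjoint A B ∧
    (∀ a ∈ A, ∀ b ∈ B, H.Adj a b) ∧
    IsThreshold (H.induce A) ∧ IsThreshold (H.induce B)

/-- A vertex `x` of `G` is good if its neighborhood is empty, or induces a threshold
graph, or the union of two threshold graphs, or the join of two threshold graphs. -/
def GoodVertex {V : Type*} (G : SimpleGraph V) (x : V) : Prop :=
  G.neighborSet x = ∅ ∨
  IsThreshold (G.induce (G.neighborSet x)) ∨
  IsUnionTwoThreshold (G.induce (G.neighborSet x)) ∨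
  IsJoinTwoThreshold (G.induce (G.neighborSet x))

/-- `G` is good if every vertex of `G` is good. -/
def Good {V : Type*} (G : SimpleGraph V) : Prop := ∀ x : V, GoodVertex G x

/-- The simple graph on `Fin n` with the given list of edges. -/
def graphOfEdges (n : ℕ) (E : List (Fin n × Fin n)) : SimpleGraph (Fin n) :=
  SimpleGraph.fromRel (fun a b => (a, b) ∈ E)

/-- The gem: a path `0-1-2-3` together with a vertex `4` adjacent to all path vertices. -/
def gem : SimpleGraph (Fin 5) :=
  graphOfEdges 5 [(0, 1), (1, 2), (2, 3), (4, 0), (4, 1), (4, 2), (4, 3)]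

/-- `C₄ + K₁` (a 4-cycle `0,1,2,3` plus the isolated vertex `4`) together with a universal
vertex `5`. -/
def c4K1Universal : SimpleGraph (Fin 6) :=
  graphOfEdges 6 [(0, 1), (1, 2), (2, 3), (3, 0), (5, 0), (5, 1), (5, 2), (5, 3), (5, 4)]

/-- The butterfly (two triangles `0,1,2` and `2,3,4` sharing the vertex `2`; the complement
of `C₄ + K₁`, i.e. its local complement at the universal vertex) together with a universal
vertex `5`. -/
def butterflyUniversal : SimpleGraph (Fin 6) :=
  graphOfEdges 6 [(0, 1), (0, 2), (1, 2), (2, 3), (2, 4), (3, 4),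
    (5, 0), (5, 1), (5, 2), (5, 3), (5, 4)]

/-- `3K₂` (three disjoint edges) together with a universal vertex `6`. -/
def threeK2Universal : SimpleGraph (Fin 7) :=
  graphOfEdges 7 [(0, 1), (2, 3), (4, 5), (6, 0), (6, 1), (6, 2), (6, 3), (6, 4), (6, 5)]

/-- The octahedron `K_{2,2,2}` (the complement of `3K₂`, parts `{0,1}`, `{2,3}`, `{4,5}`)
together with a universal vertex `6`. -/
def octahedronUniversal : SimpleGraph (Fin 7) :=
  graphOfEdges 7 [(0, 2), (0, 3), (0, 4), (0, 5), (1, 2), (1, 3), (1, 4), (1, 5),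
    (2, 4), (2, 5), (3, 4), (3, 5), (6, 0), (6, 1), (6, 2), (6, 3), (6, 4), (6, 5)]

/-!
A vertex is good exactly when its neighbourhood is a threshold graph or a disjoint union or join
of two threshold graphs, and adding a universal vertex to `P₄`, `C₄ + K₁`, the butterfly, `3K₂`
and the octahedron gives the five forbidden graphs. So the theorem says that these five are the
minimal induced subgraphs outside that class of neighbourhoods.

None of the five is in the class, and the class is closed under induced subgraphs. Conversely,
let `K` contain none of them. If `K` also has no induced `2K₂` or `C₄`, it is threshold by the
Chvátal–Hammer argument. If it has an induced `2K₂`, the two edges lie in different components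
(a walk between them would create a `P₄` or a butterfly), and the component of one edge and
the rest are threshold graphs. If it has a `C₄` but no `2K₂`, its complement has a `2K₂`; the
five graphs are closed under complementation up to isomorphism, so `Kᶜ` is a union and `K` a
join.
-/

open SimpleGraph

section

variable {V W : Type*}

section Threshold

variable {G : SimpleGraph V} {H : SimpleGraph W}

def SimpleGraph.Embedding.codRestrict (f : H ↪g G) (s : Set V) (hf : ∀ w, f w ∈ s) :
    H ↪g G.induce s :=
  ⟨⟨fun w => ⟨f w, hf w⟩, fun _ _ h => f.injective (congrArg Subtype.val h)⟩, f.map_adj_iff⟩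

theorem IsThreshold.of_embedding (hG : IsThreshold G) (f : H ↪g G) : IsThreshold H := by
  intro S hS
  obtain ⟨_, ⟨x, hx, rfl⟩, hfx⟩ := hG (f '' S) (hS.image f)
  refine ⟨x, hx, hfx.imp (fun h y hy => ?_) (fun h y hy hyx => ?_)⟩
  · exact mt f.map_adj_iff.2 (h (f y) (Set.mem_image_of_mem f hy))
  · exact f.map_adj_iff.1 (h (f y) (Set.mem_image_of_mem f hy) (f.injective.ne hyx))

theorem isThreshold_of_isEmpty [IsEmpty V] : IsThreshold G :=
  fun _ ⟨x, _⟩ => isEmptyElim x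

theorem not_isThreshold_of_forall [Nonempty V]
    (h : ∀ x, (∃ y, G.Adj x y) ∧ ∃ y, y ≠ x ∧ ¬G.Adj x y) : ¬IsThreshold G := by
  intro hG
  obtain ⟨x, -, hx⟩ := hG Set.univ Set.univ_nonempty
  obtain ⟨⟨y, hy⟩, z, hzx, hz⟩ := h x
  exact hx.elim (fun h' => h' y trivial hy) (fun h' => hz (h' z trivial hzx))

theorem IsThreshold.compl (hG : IsThreshold G) : IsThreshold Gᶜ := by
  intro S hS
  obtain ⟨x, hx, h⟩ := hG S hS
  refine ⟨x, hx, h.symm.imp (fun h y hy hxy => ?_) (fun h y hy hyx => ?_)⟩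
  · obtain ⟨hne, hnadj⟩ := (compl_adj G x y).1 hxy
    exact hnadj (h y hy hne.symm)
  · exact (compl_adj G x y).2 ⟨hyx.symm, h y hy⟩

theorem isThreshold_compl_iff : IsThreshold Gᶜ ↔ IsThreshold G :=
  ⟨fun h => compl_compl G ▸ h.compl, IsThreshold.compl⟩

theorem isThreshold_induce_compl_iff (s : Set V) :
    IsThreshold (Gᶜ.induce s) ↔ IsThreshold (G.induce s) := by
  have : Gᶜ.induce s = (G.induce s)ᶜ := by ext; simp [Subtype.coe_inj]
  rw [this, isThreshold_compl_iff]

theorem isJoinTwoThreshold_iff_isUnionTwoThreshold_compl :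
    IsJoinTwoThreshold G ↔ IsUnionTwoThreshold Gᶜ := by
  simp only [IsJoinTwoThreshold, IsUnionTwoThreshold, isThreshold_induce_compl_iff]
  refine exists₂_congr fun A B => and_congr_right fun _ => and_congr_right fun _ =>
    and_congr_right fun _ => and_congr_right fun hAB => and_congr_left fun _ =>
    forall₂_congr fun a ha => forall₂_congr fun b hb => ?_
  rw [compl_adj, not_and, not_not]
  exact ⟨fun h _ => h, fun h => h (hAB.ne_of_mem ha hb)⟩

theorem IsUnionTwoThreshold.exists_side (hG : IsUnionTwoThreshold G) :
    ∃ A : Set V, IsThreshold (G.induce A) ∧ IsThreshold (G.induce Aᶜ) ∧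
      ∀ u v, G.Adj u v → (u ∈ A ↔ v ∈ A) := by
  obtain ⟨A, B, -, -, hAB, hdisj, hcross, hA, hB⟩ := hG
  have hBA : Aᶜ = B := IsCompl.compl_eq ⟨hdisj, codisjoint_iff.2 hAB⟩
  refine ⟨A, hA, hBA ▸ hB, fun u v huv => ⟨fun hu => ?_, fun hv => ?_⟩⟩
  · by_contra hv
    exact hcross u hu v (hBA ▸ hv) huv
  · by_contra hu
    exact hcross v hv u (hBA ▸ hu) huv.symm

theorem SimpleGraph.Reachable.mem_iff_mem {s : Set V}
    (hs : ∀ u v, G.Adj u v → (u ∈ s ↔ v ∈ s)) {u v : V} (h : G.Reachable u v) :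
    u ∈ s ↔ v ∈ s := by
  obtain ⟨p⟩ := h
  induction p with
  | nil => exact Iff.rfl
  | cons huv _ ih => exact (hs _ _ huv).trans ih

theorem isThreshold_of_embedding_of_mem_iff {A : Set V} (hA : IsThreshold (G.induce A))
    (hAc : IsThreshold (G.induce Aᶜ)) (f : H ↪g G) (hf : ∀ v w, f v ∈ A ↔ f w ∈ A) :
    IsThreshold H := by
  by_cases h : ∃ v, f v ∈ A
  · obtain ⟨v, hv⟩ := h
    exact hA.of_embedding (f.codRestrict A fun w => (hf v w).1 hv)
  · exact hAc.of_embedding (f.codRestrict Aᶜ (not_exists.1 h))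

theorem IsUnionTwoThreshold.not_isIndContained (hG : IsUnionTwoThreshold G) (hH : H.Connected)
    (hHthr : ¬IsThreshold H) : ¬H ⊴ G := by
  rintro ⟨f⟩
  obtain ⟨A, hA, hAc, hside⟩ := hG.exists_side
  refine hHthr (isThreshold_of_embedding_of_mem_iff hA hAc f fun v w => ?_)
  exact ((hH.preconnected v w).map f.toHom).mem_iff_mem hside

end Threshold

section Neighborhood

variable {G : SimpleGraph V} {H : SimpleGraph W}

def IsThresholdUnionOrJoin (G : SimpleGraph V) : Prop :=
  IsThreshold G ∨ IsUnionTwoThreshold G ∨ IsJoinTwoThreshold G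

theorem goodVertex_iff {x : V} :
    GoodVertex G x ↔ IsThresholdUnionOrJoin (G.induce (G.neighborSet x)) := by
  refine ⟨fun h => h.elim (fun hx => Or.inl ?_) id, Or.inr⟩
  have : IsEmpty (G.neighborSet x) := Set.isEmpty_coe_sort.2 hx
  exact isThreshold_of_isEmpty

theorem IsUnionTwoThreshold.of_embedding (hG : IsUnionTwoThreshold G) (f : H ↪g G) :
    IsThreshold H ∨ IsUnionTwoThreshold H := by
  obtain ⟨A, B, -, -, hAB, hdisj, hcross, hA, hB⟩ := hG
  have hmem : ∀ w, f w ∈ A ∨ f w ∈ B := fun w => Set.eq_univ_iff_forall.1 hAB (f w)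
  by_cases hA' : (f ⁻¹' A).Nonempty
  · by_cases hB' : (f ⁻¹' B).Nonempty
    · refine Or.inr ⟨f ⁻¹' A, f ⁻¹' B, hA', hB', by rw [← Set.preimage_union, hAB]; rfl,
        hdisj.preimage f, fun a ha b hb => mt f.map_adj_iff.2 (hcross _ ha _ hb),
        hA.of_embedding ?_, hB.of_embedding ?_⟩
      · exact (f.comp (Embedding.induce _)).codRestrict A fun w => w.2
      · exact (f.comp (Embedding.induce _)).codRestrict B fun w => w.2
    · exact Or.inl (hA.of_embedding (f.codRestrict A fun w =>
        (hmem w).resolve_right fun hw => hB' ⟨w, hw⟩))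
  · exact Or.inl (hB.of_embedding (f.codRestrict B fun w =>
      (hmem w).resolve_left fun hw => hA' ⟨w, hw⟩))

theorem IsJoinTwoThreshold.of_embedding (hG : IsJoinTwoThreshold G) (f : H ↪g G) :
    IsThreshold H ∨ IsJoinTwoThreshold H := by
  rw [isJoinTwoThreshold_iff_isUnionTwoThreshold_compl] at hG ⊢
  rw [← isThreshold_compl_iff]
  exact hG.of_embedding (Embedding.complEquiv f)

theorem IsThresholdUnionOrJoin.of_embedding (hG : IsThresholdUnionOrJoin G) (f : H ↪g G) :
    IsThresholdUnionOrJoin H := by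
  rcases hG with hG | hG | hG
  · exact Or.inl (hG.of_embedding f)
  · exact (hG.of_embedding f).imp_right Or.inl
  · exact (hG.of_embedding f).imp_right Or.inr

/-- A join decomposition of `F` is a union decomposition of `Fᶜ`, which restricts to `F'`. -/
theorem not_isThresholdUnionOrJoin {F : SimpleGraph V} {F' : SimpleGraph W}
    (hF : ¬IsThreshold F) (hF₂ : ¬IsUnionTwoThreshold F) (e : F' ↪g Fᶜ)
    (hF' : ¬IsThreshold F') (hF'₂ : ¬IsUnionTwoThreshold F') : ¬IsThresholdUnionOrJoin F := by
  rintro (h | h | h)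
  · exact hF h
  · exact hF₂ h
  · rcases (isJoinTwoThreshold_iff_isUnionTwoThreshold_compl.1 h).of_embedding e with h' | h'
    exacts [hF' h', hF'₂ h']

end Neighborhood

section SmallGraphs

instance graphOfEdges.instDecidableRelAdj (n : ℕ) (E : List (Fin n × Fin n)) :
    DecidableRel (graphOfEdges n E).Adj := fun a b =>
  decidable_of_iff _ (fromRel_adj _ a b).symm

/- Numbered so that deleting the last (universal) vertex of `gem`, `c4K1Universal`,
`butterflyUniversal`, `threeK2Universal` and `octahedronUniversal` leaves `p4`, `c4K1`,
`butterfly`, `threeK2` and `octahedron`. -/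

abbrev p4 : SimpleGraph (Fin 4) := graphOfEdges 4 [(0, 1), (1, 2), (2, 3)]

abbrev c4 : SimpleGraph (Fin 4) := graphOfEdges 4 [(0, 1), (1, 2), (2, 3), (3, 0)]

abbrev twoK2 : SimpleGraph (Fin 4) := graphOfEdges 4 [(0, 1), (2, 3)]

abbrev c4K1 : SimpleGraph (Fin 5) := graphOfEdges 5 [(0, 1), (1, 2), (2, 3), (3, 0)]

abbrev butterfly : SimpleGraph (Fin 5) :=
  graphOfEdges 5 [(0, 1), (0, 2), (1, 2), (2, 3), (2, 4), (3, 4)]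

abbrev threeK2 : SimpleGraph (Fin 6) := graphOfEdges 6 [(0, 1), (2, 3), (4, 5)]

abbrev octahedron : SimpleGraph (Fin 6) :=
  graphOfEdges 6 [(0, 2), (0, 3), (0, 4), (0, 5), (1, 2), (1, 3), (1, 4), (1, 5),
    (2, 4), (2, 5), (3, 4), (3, 5)]

def c4EmbeddingC4K1 : c4 ↪g c4K1 := ⟨⟨Fin.castSucc, Fin.castSucc_injective _⟩, by decide⟩

def twoK2EmbeddingButterfly : twoK2 ↪g butterfly := ⟨⟨![0, 1, 3, 4], by decide⟩, by decide⟩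

/-- The edges number `i` and `j` of `threeK2`. -/
def twoK2EmbeddingThreeK2 (i j : Fin 3) (hij : i ≠ j) : twoK2 ↪g threeK2 := by
  refine ⟨⟨![![0, 2, 4] i, ![1, 3, 5] i, ![0, 2, 4] j, ![1, 3, 5] j], ?_⟩, ?_⟩ <;>
    revert i j <;> decide

def p4EmbeddingCompl : p4 ↪g p4ᶜ := ⟨⟨![2, 0, 3, 1], by decide⟩, by decide⟩

def twoK2EmbeddingC4Compl : twoK2 ↪g c4ᶜ := ⟨⟨![0, 2, 1, 3], by decide⟩, by decide⟩

def butterflyEmbeddingC4K1Compl : butterfly ↪g c4K1ᶜ :=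
  ⟨⟨![0, 2, 4, 1, 3], by decide⟩, by decide⟩

def c4K1EmbeddingButterflyCompl : c4K1 ↪g butterflyᶜ :=
  ⟨⟨![0, 3, 1, 4, 2], by decide⟩, by decide⟩

def octahedronEmbeddingThreeK2Compl : octahedron ↪g threeK2ᶜ := ⟨⟨id, by decide⟩, by decide⟩

def threeK2EmbeddingOctahedronCompl : threeK2 ↪g octahedronᶜ := ⟨⟨id, by decide⟩, by decide⟩

end SmallGraphs

section Obstructions

variable {G : SimpleGraph V}

theorem connected_of_forall_dist_le_two (r : V)
    (h : ∀ v, v = r ∨ G.Adj r v ∨ ∃ w, G.Adj r w ∧ G.Adj w v) : G.Connected := by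
  refine (connected_iff_exists_forall_reachable G).2 ⟨r, fun v => ?_⟩
  rcases h v with rfl | hv | ⟨w, hw, hwv⟩
  exacts [Reachable.rfl, hv.reachable, hw.reachable.trans hwv.reachable]

theorem not_isThreshold_p4 : ¬IsThreshold p4 := not_isThreshold_of_forall (by decide)

theorem not_isThreshold_c4 : ¬IsThreshold c4 := not_isThreshold_of_forall (by decide)

theorem not_isThreshold_twoK2 : ¬IsThreshold twoK2 := not_isThreshold_of_forall (by decide)

theorem not_isThreshold_c4K1 : ¬IsThreshold c4K1 :=
  fun h => not_isThreshold_c4 (h.of_embedding c4EmbeddingC4K1)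

theorem not_isThreshold_butterfly : ¬IsThreshold butterfly :=
  fun h => not_isThreshold_twoK2 (h.of_embedding twoK2EmbeddingButterfly)

theorem not_isThreshold_threeK2 : ¬IsThreshold threeK2 :=
  fun h => not_isThreshold_twoK2 (h.of_embedding (twoK2EmbeddingThreeK2 0 1 (by decide)))

theorem not_isThreshold_octahedron : ¬IsThreshold octahedron :=
  not_isThreshold_of_forall (by decide)

theorem not_isUnionTwoThreshold_p4 : ¬IsUnionTwoThreshold p4 := fun h =>
  h.not_isIndContained (connected_of_forall_dist_le_two 1 (by decide)) not_isThreshold_p4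
    IsIndContained.rfl

theorem not_isUnionTwoThreshold_c4K1 : ¬IsUnionTwoThreshold c4K1 := fun h =>
  h.not_isIndContained (connected_of_forall_dist_le_two 0 (by decide)) not_isThreshold_c4
    c4EmbeddingC4K1.isIndContained

theorem not_isUnionTwoThreshold_butterfly : ¬IsUnionTwoThreshold butterfly := fun h =>
  h.not_isIndContained (connected_of_forall_dist_le_two 2 (by decide)) not_isThreshold_butterfly
    IsIndContained.rfl

theorem not_isUnionTwoThreshold_octahedron : ¬IsUnionTwoThreshold octahedron := fun h =>
  h.not_isIndContained (connected_of_forall_dist_le_two 0 (by decide))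
    not_isThreshold_octahedron IsIndContained.rfl

theorem not_mem_iff_of_twoK2_embedding {A : Set V} (hA : IsThreshold (G.induce A))
    (hAc : IsThreshold (G.induce Aᶜ)) (hside : ∀ u v, G.Adj u v → (u ∈ A ↔ v ∈ A))
    (f : twoK2 ↪g G) : ¬(f 0 ∈ A ↔ f 2 ∈ A) := by
  intro h02
  have h01 := hside _ _ (f.map_adj_iff.2 (by decide : twoK2.Adj 0 1))
  have h23 := hside _ _ (f.map_adj_iff.2 (by decide : twoK2.Adj 2 3))
  have hf : ∀ v, f v ∈ A ↔ f 0 ∈ A := by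
    intro v
    fin_cases v
    exacts [Iff.rfl, h01.symm, h02.symm, h23.symm.trans h02.symm]
  exact not_isThreshold_twoK2
    (isThreshold_of_embedding_of_mem_iff hA hAc f fun v w => (hf v).trans (hf w).symm)

theorem not_isUnionTwoThreshold_threeK2 : ¬IsUnionTwoThreshold threeK2 := by
  intro h
  obtain ⟨A, hA, hAc, hside⟩ := h.exists_side
  have hne (i j : Fin 3) (hij : i ≠ j) :=
    not_mem_iff_of_twoK2_embedding hA hAc hside (twoK2EmbeddingThreeK2 i j hij)
  have h01 : ¬(0 ∈ A ↔ 2 ∈ A) := hne 0 1 (by decide)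
  have h02 : ¬(0 ∈ A ↔ 4 ∈ A) := hne 0 2 (by decide)
  have h12 : ¬(2 ∈ A ↔ 4 ∈ A) := hne 1 2 (by decide)
  tauto

end Obstructions

section Construction

variable {G : SimpleGraph V}

/-- Only pairs of non-adjacent vertices with equal neighbourhoods in `F` (as the opposite
corners of `C₄`) need to be separated by hand: all other pairs are separated by adjacency. -/
theorem isIndContained_of_adj_iff {n : ℕ} {F : SimpleGraph (Fin n)} (f : Fin n → V)
    (hf : ∀ i j, i < j → (G.Adj (f i) (f j) ↔ F.Adj i j))
    (htwin : ∀ i j, i < j → (∀ k, F.Adj k i ↔ F.Adj k j) → f i ≠ f j) : F ⊴ G := by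
  have hf' : ∀ i j, G.Adj (f i) (f j) ↔ F.Adj i j := by
    intro i j
    rcases lt_trichotomy i j with h | rfl | h
    · exact hf i j h
    · simp
    · exact (G.adj_comm _ _).trans ((hf j i h).trans (F.adj_comm _ _))
  refine ⟨⟨⟨f, fun i j hij => by_contra fun hne => ?_⟩, hf' _ _⟩⟩
  have htw : ∀ k, F.Adj k i ↔ F.Adj k j := fun k => (hf' k i).symm.trans (hij ▸ hf' k j)
  rcases lt_or_gt_of_ne hne with h | h
  · exact htwin i j h htw hij
  · exact htwin j i h (fun k => (htw k).symm) hij.symm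

theorem p4_isIndContained {a b c d : V} (hab : G.Adj a b) (hbc : G.Adj b c) (hcd : G.Adj c d)
    (hac : ¬G.Adj a c) (had : ¬G.Adj a d) (hbd : ¬G.Adj b d) : p4 ⊴ G :=
  isIndContained_of_adj_iff ![a, b, c, d] (by simp +decide [Fin.forall_fin_succ, *])
    (by simp +decide [Fin.forall_fin_succ])

theorem c4_isIndContained {a b c d : V} (hab : G.Adj a b) (hbc : G.Adj b c) (hcd : G.Adj c d)
    (had : G.Adj a d) (hac : ¬G.Adj a c) (hbd : ¬G.Adj b d) (hac' : a ≠ c) (hbd' : b ≠ d) :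
    c4 ⊴ G :=
  isIndContained_of_adj_iff ![a, b, c, d] (by simp +decide [Fin.forall_fin_succ, *])
    (by simp +decide [Fin.forall_fin_succ, *])

theorem twoK2_isIndContained {a b c d : V} (hab : G.Adj a b) (hcd : G.Adj c d)
    (hac : ¬G.Adj a c) (had : ¬G.Adj a d) (hbc : ¬G.Adj b c) (hbd : ¬G.Adj b d) :
    twoK2 ⊴ G :=
  isIndContained_of_adj_iff ![a, b, c, d] (by simp +decide [Fin.forall_fin_succ, *])
    (by simp +decide [Fin.forall_fin_succ])

theorem butterfly_isIndContained {a b v c d : V} (hab : G.Adj a b) (hav : G.Adj a v)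
    (hbv : G.Adj b v) (hvc : G.Adj v c) (hvd : G.Adj v d) (hcd : G.Adj c d)
    (hac : ¬G.Adj a c) (had : ¬G.Adj a d) (hbc : ¬G.Adj b c) (hbd : ¬G.Adj b d) :
    butterfly ⊴ G :=
  isIndContained_of_adj_iff ![a, b, v, c, d] (by simp +decide [Fin.forall_fin_succ, *])
    (by simp +decide [Fin.forall_fin_succ])

theorem exists_embedding_snoc {n : ℕ} {P : SimpleGraph (Fin (n + 1))} {F : SimpleGraph (Fin n)}
    (hPF : ∀ i j, P.Adj i.castSucc j.castSucc ↔ F.Adj i j) (g : F ↪g G) (v : V)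
    (hv : ∀ i, g i ≠ v) (hadj : ∀ i, G.Adj (g i) v ↔ P.Adj i.castSucc (Fin.last n)) :
    ∃ e : P ↪g G, (∀ i, e i.castSucc = g i) ∧ e (Fin.last n) = v := by
  let f : Fin (n + 1) → V := Fin.lastCases v g
  have hinj : f.Injective := by
    intro i j hij
    induction i using Fin.lastCases <;> induction j using Fin.lastCases <;>
      simp_all [f, (hv _).symm]
  have hf : ∀ i j, G.Adj (f i) (f j) ↔ P.Adj i j := by
    intro i j
    induction i using Fin.lastCases <;> induction j using Fin.lastCases <;>
      simp [f, hPF, hadj, G.adj_comm v, P.adj_comm (Fin.last n)]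
  exact ⟨⟨⟨f, hinj⟩, hf _ _⟩, fun i => Fin.lastCases_castSucc (motive := fun _ => V) _,
    Fin.lastCases_last (motive := fun _ => V)⟩

theorem c4K1_isIndContained {s : Set V} (g : c4 ↪g G.induce s) {x : V}
    (hx : ∀ u ∈ s, u ≠ x ∧ ¬G.Adj u x) : c4K1 ⊴ G := by
  have hlast : ∀ i : Fin 4, ¬c4K1.Adj i.castSucc (Fin.last 4) := by decide
  obtain ⟨e, -⟩ := exists_embedding_snoc (by decide) ((Embedding.induce s).comp g) x
    (fun i => (hx _ (g i).2).1) (fun i => iff_of_false (hx _ (g i).2).2 (hlast i))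
  exact ⟨e⟩

theorem threeK2_isIndContained {s : Set V} (g : twoK2 ↪g G.induce s) {a b : V}
    (hab : G.Adj a b) (ha : ∀ u ∈ s, u ≠ a ∧ ¬G.Adj u a) (hb : ∀ u ∈ s, u ≠ b ∧ ¬G.Adj u b) :
    threeK2 ⊴ G := by
  have h₁ : ∀ i : Fin 4, ¬(graphOfEdges 5 [(0, 1), (2, 3)]).Adj i.castSucc (Fin.last 4) := by
    decide
  have h₂ : ∀ i : Fin 4, ¬threeK2.Adj i.castSucc.castSucc (Fin.last 5) := by decide
  obtain ⟨e, he, he'⟩ := exists_embedding_snoc (P := graphOfEdges 5 [(0, 1), (2, 3)])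
    (by decide) ((Embedding.induce s).comp g) a (fun i => (ha _ (g i).2).1)
    (fun i => iff_of_false (ha _ (g i).2).2 (h₁ i))
  obtain ⟨e', -⟩ := exists_embedding_snoc (P := threeK2) (by decide) e b
    (Fin.lastCases (by rw [he']; exact hab.ne) fun i => by rw [he]; exact (hb _ (g i).2).1)
    (Fin.lastCases (by rw [he']; exact iff_of_true hab (by decide))
      fun i => by rw [he]; exact iff_of_false (hb _ (g i).2).2 (h₂ i))
  exact ⟨e'⟩

end Construction

section ThresholdCharacterization

variable {G : SimpleGraph V}

theorem adj_or_adj_of_adj_of_adj (hP4 : ¬p4 ⊴ G) (hC4 : ¬c4 ⊴ G) (h2K2 : ¬twoK2 ⊴ G)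
    {u v a b : V} (hua : G.Adj u a) (hvb : G.Adj v b) (hav : a ≠ v) (hbu : b ≠ u) :
    G.Adj u b ∨ G.Adj v a := by
  by_contra! ⟨hub, hva⟩
  have hav' : ¬G.Adj a v := fun h => hva h.symm
  by_cases huv : G.Adj u v <;> by_cases hab : G.Adj a b
  · exact hC4 (c4_isIndContained hua hab hvb.symm huv hub hav' hbu.symm hav)
  · exact hP4 (p4_isIndContained hua.symm huv hvb hav' hab hub)
  · exact hP4 (p4_isIndContained hua hab hvb.symm hub huv hav')
  · exact h2K2 (twoK2_isIndContained hua hvb huv hub hav' hab)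

theorem filter_adj_subset_or_subset [DecidableRel G.Adj] (hP4 : ¬p4 ⊴ G) (hC4 : ¬c4 ⊴ G)
    (h2K2 : ¬twoK2 ⊴ G) (S : Finset V) {x y : V} (hxy : ¬G.Adj x y) :
    S.filter (G.Adj x) ⊆ S.filter (G.Adj y) ∨ S.filter (G.Adj y) ⊆ S.filter (G.Adj x) := by
  by_contra! ⟨hx, hy⟩
  obtain ⟨a, ha, hay⟩ := Finset.not_subset.1 hx
  obtain ⟨b, hb, hbx⟩ := Finset.not_subset.1 hy
  rw [Finset.mem_filter] at ha hb hay hbx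
  rcases adj_or_adj_of_adj_of_adj hP4 hC4 h2K2 ha.2 hb.2 (fun h => hxy (h ▸ ha.2))
    (fun h => hxy (h ▸ hb.2).symm) with h | h
  exacts [hbx ⟨hb.1, h⟩, hay ⟨ha.1, h⟩]

open Classical in
/-- Chvátal–Hammer: if a vertex `x` of maximum degree in `S` is not universal, it has a
non-neighbour `y`, and the neighbours `z` of `y` are neighbours of `x`; then `z` is adjacent
to `x`, `y` and all other neighbours of `x`, so has larger degree than `x`. -/
theorem exists_isolated_or_universal (hP4 : ¬p4 ⊴ G) (hC4 : ¬c4 ⊴ G) (h2K2 : ¬twoK2 ⊴ G)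
    (S : Finset V) (hS : S.Nonempty) :
    ∃ x ∈ S, (∀ y ∈ S, ¬G.Adj x y) ∨ (∀ y ∈ S, y ≠ x → G.Adj x y) := by
  let N : V → Finset V := fun v => S.filter (G.Adj v)
  have mem_N {v w : V} : w ∈ N v ↔ w ∈ S ∧ G.Adj v w := Finset.mem_filter
  obtain ⟨x, hxS, hxmax⟩ := S.exists_max_image (fun v => (N v).card) hS
  by_contra! hno
  obtain ⟨-, y, hyS, hyx, hxy⟩ := hno x hxS
  obtain ⟨⟨z, hzS, hyz⟩, -⟩ := hno y hyS
  have hNyx : N y ⊆ N x := by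
    rcases filter_adj_subset_or_subset hP4 hC4 h2K2 S hxy with h | h
    · exact (Finset.eq_of_subset_of_card_le h (hxmax y hyS)).symm.subset
    · exact h
  have hzx : z ∈ N x := hNyx (mem_N.2 ⟨hzS, hyz⟩)
  have hsub : insert y (insert x ((N x).erase z)) ⊆ N z := by
    intro w hw
    simp only [Finset.mem_insert, Finset.mem_erase] at hw
    rcases hw with rfl | rfl | ⟨hwz, hw⟩
    · exact mem_N.2 ⟨hyS, hyz.symm⟩
    · exact mem_N.2 ⟨hxS, (mem_N.1 hzx).2.symm⟩
    · exact mem_N.2 ⟨(mem_N.1 hw).1, (adj_or_adj_of_adj_of_adj hP4 hC4 h2K2 hyz.symm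
        (mem_N.1 hw).2 hyx hwz).resolve_right hxy⟩
  have hy : y ∉ insert x ((N x).erase z) := by
    simp only [Finset.mem_insert, Finset.mem_erase, not_or]
    exact ⟨hyx, fun h => hxy (mem_N.1 h.2).2⟩
  have hx : x ∉ (N x).erase z :=
    fun h => G.loopless.irrefl x (mem_N.1 (Finset.mem_of_mem_erase h)).2
  have hcard := Finset.card_le_card hsub
  rw [Finset.card_insert_of_notMem hy, Finset.card_insert_of_notMem hx,
    Finset.card_erase_of_mem hzx] at hcard
  have := hxmax z hzS
  have := Finset.card_pos.2 ⟨z, hzx⟩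
  omega

theorem isThreshold_of_not_isIndContained [Finite V] (hP4 : ¬p4 ⊴ G) (hC4 : ¬c4 ⊴ G)
    (h2K2 : ¬twoK2 ⊴ G) : IsThreshold G := fun S hS => by
  simpa using exists_isolated_or_universal hP4 hC4 h2K2 S.toFinite.toFinset (by simpa using hS)

end ThresholdCharacterization

section UnionStructure

variable {G : SimpleGraph V}

/-- The first step `ev` of a walk from `e` to `g` makes a `P₄` or a butterfly with `gh`,
unless `ve` is again an edge forming an induced `2K₂` with `gh`. -/
theorem not_reachable_of_twoK2 (hP4 : ¬p4 ⊴ G) (hbf : ¬butterfly ⊴ G) {e f g h : V}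
    (hef : G.Adj e f) (hgh : G.Adj g h) (heg : ¬G.Adj e g) (heh : ¬G.Adj e h)
    (hfg : ¬G.Adj f g) (hfh : ¬G.Adj f h) : ¬G.Reachable e g := by
  rintro ⟨p⟩
  induction p generalizing f with
  | nil => exact heh hgh
  | @cons e v g hev _ ih =>
    by_cases hvg : G.Adj v g <;> by_cases hvh : G.Adj v h
    · by_cases hvf : G.Adj v f
      · exact hbf (butterfly_isIndContained hef hev hvf.symm hvg hvh hgh heg heh hfg hfh)
      · exact hP4 (p4_isIndContained hef.symm hev hvg (fun h => hvf h.symm) hfg heg)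
    · exact hP4 (p4_isIndContained hev hvg hgh heg heh hvh)
    · exact hP4 (p4_isIndContained hev hvh hgh.symm heh heg hvg)
    · exact ih hev.symm hgh hvg hvh heg heh

theorem not_reachable_of_twoK2_embedding (hP4 : ¬p4 ⊴ G) (hbf : ¬butterfly ⊴ G)
    (f : twoK2 ↪g G) : ¬G.Reachable (f 0) (f 2) :=
  not_reachable_of_twoK2 hP4 hbf (f.map_adj_iff.2 (by decide : twoK2.Adj 0 1))
    (f.map_adj_iff.2 (by decide : twoK2.Adj 2 3))
    (mt f.map_adj_iff.1 (by decide : ¬twoK2.Adj 0 2))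
    (mt f.map_adj_iff.1 (by decide : ¬twoK2.Adj 0 3))
    (mt f.map_adj_iff.1 (by decide : ¬twoK2.Adj 1 2))
    (mt f.map_adj_iff.1 (by decide : ¬twoK2.Adj 1 3))

/-- The sides are the component `A` of one edge `f 0 f 1` of the `2K₂` and its complement. A
`C₄` on one side forms a `C₄ + K₁` with a vertex of the other side, a `2K₂` in `A` contradicts
`not_reachable_of_twoK2`, and a `2K₂` outside `A` forms a `3K₂` with the edge `f 0 f 1`. -/
theorem isUnionTwoThreshold_of_twoK2 [Finite V] (hP4 : ¬p4 ⊴ G) (hC4K1 : ¬c4K1 ⊴ G)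
    (hbf : ¬butterfly ⊴ G) (h3K2 : ¬threeK2 ⊴ G) (f : twoK2 ↪g G) :
    IsUnionTwoThreshold G := by
  set A := {v | G.Reachable (f 0) v}
  have hA0 : f 0 ∈ A := Reachable.rfl
  have hf01 : G.Adj (f 0) (f 1) := f.map_adj_iff.2 (by decide)
  have hf2 : f 2 ∉ A := not_reachable_of_twoK2_embedding hP4 hbf f
  have hfar {u w : V} (hu : u ∈ A) (hw : w ∉ A) : w ≠ u ∧ ¬G.Adj w u :=
    ⟨fun h => hw (h ▸ hu), fun h => hw (hu.trans h.symm.reachable)⟩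
  have hP4' (s : Set V) : ¬p4 ⊴ G.induce s := fun h => hP4 (h.trans ⟨Embedding.induce s⟩)
  refine ⟨A, Aᶜ, ⟨f 0, hA0⟩, ⟨f 2, hf2⟩, Set.union_compl_self A, disjoint_compl_right,
    fun u hu v hv huv => (hfar hu hv).2 huv.symm,
    isThreshold_of_not_isIndContained (hP4' A) (fun ⟨g⟩ => hC4K1 ?_) fun ⟨g⟩ => ?_,
    isThreshold_of_not_isIndContained (hP4' Aᶜ) (fun ⟨g⟩ => hC4K1 ?_) fun ⟨g⟩ => h3K2 ?_⟩
  · exact c4K1_isIndContained g fun u hu =>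
      ⟨(hfar hu hf2).1.symm, fun h => (hfar hu hf2).2 h.symm⟩
  · exact not_reachable_of_twoK2_embedding hP4 hbf ((Embedding.induce A).comp g)
      ((g 0).2.symm.trans (g 2).2)
  · exact c4K1_isIndContained g fun u hu => hfar hA0 hu
  · exact threeK2_isIndContained g hf01 (fun u hu => hfar hA0 hu)
      fun u hu => hfar hf01.reachable hu

end UnionStructure

section Main

variable {G : SimpleGraph V}

theorem not_isIndContained_compl {U : Type*} {F : SimpleGraph W} {F' : SimpleGraph U}
    (e : F' ↪g Fᶜ) (h : ¬F' ⊴ G) : ¬F ⊴ Gᶜ := fun hF =>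
  h (e.isIndContained.trans (compl_compl G ▸ compl_isIndContained_compl.2 hF))

theorem isThresholdUnionOrJoin_of_not_isIndContained [Finite V] (hP4 : ¬p4 ⊴ G)
    (hC4K1 : ¬c4K1 ⊴ G) (hbf : ¬butterfly ⊴ G) (h3K2 : ¬threeK2 ⊴ G)
    (hoct : ¬octahedron ⊴ G) : IsThresholdUnionOrJoin G := by
  by_cases h2K2 : twoK2 ⊴ G
  · exact Or.inr (Or.inl (isUnionTwoThreshold_of_twoK2 hP4 hC4K1 hbf h3K2 h2K2.some))
  by_cases hC4 : c4 ⊴ G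
  · have h2K2' : twoK2 ⊴ Gᶜ :=
      twoK2EmbeddingC4Compl.isIndContained.trans (compl_isIndContained_compl.2 hC4)
    exact Or.inr (Or.inr (isJoinTwoThreshold_iff_isUnionTwoThreshold_compl.2
      (isUnionTwoThreshold_of_twoK2 (not_isIndContained_compl p4EmbeddingCompl hP4)
        (not_isIndContained_compl butterflyEmbeddingC4K1Compl hbf)
        (not_isIndContained_compl c4K1EmbeddingButterflyCompl hC4K1)
        (not_isIndContained_compl octahedronEmbeddingThreeK2Compl hoct) h2K2'.some)))
  · exact Or.inl (isThreshold_of_not_isIndContained hP4 hC4 h2K2)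

theorem isThresholdUnionOrJoin_iff [Finite V] :
    IsThresholdUnionOrJoin G ↔ ¬p4 ⊴ G ∧ ¬c4K1 ⊴ G ∧ ¬butterfly ⊴ G ∧ ¬threeK2 ⊴ G ∧
      ¬octahedron ⊴ G := by
  refine ⟨fun h => ⟨fun ⟨f⟩ => ?_, fun ⟨f⟩ => ?_, fun ⟨f⟩ => ?_, fun ⟨f⟩ => ?_, fun ⟨f⟩ => ?_⟩,
    fun ⟨h1, h2, h3, h4, h5⟩ => isThresholdUnionOrJoin_of_not_isIndContained h1 h2 h3 h4 h5⟩
  · exact not_isThresholdUnionOrJoin not_isThreshold_p4 not_isUnionTwoThreshold_p4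
      p4EmbeddingCompl not_isThreshold_p4 not_isUnionTwoThreshold_p4 (h.of_embedding f)
  · exact not_isThresholdUnionOrJoin not_isThreshold_c4K1 not_isUnionTwoThreshold_c4K1
      butterflyEmbeddingC4K1Compl not_isThreshold_butterfly not_isUnionTwoThreshold_butterfly
      (h.of_embedding f)
  · exact not_isThresholdUnionOrJoin not_isThreshold_butterfly not_isUnionTwoThreshold_butterfly
      c4K1EmbeddingButterflyCompl not_isThreshold_c4K1 not_isUnionTwoThreshold_c4K1
      (h.of_embedding f)
  · exact not_isThresholdUnionOrJoin not_isThreshold_threeK2 not_isUnionTwoThreshold_threeK2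
      octahedronEmbeddingThreeK2Compl not_isThreshold_octahedron
      not_isUnionTwoThreshold_octahedron (h.of_embedding f)
  · exact not_isThresholdUnionOrJoin not_isThreshold_octahedron
      not_isUnionTwoThreshold_octahedron threeK2EmbeddingOctahedronCompl not_isThreshold_threeK2
      not_isUnionTwoThreshold_threeK2 (h.of_embedding f)

theorem isEmpty_embedding_iff_forall_neighborSet {n : ℕ} {P : SimpleGraph (Fin (n + 1))}
    {F : SimpleGraph (Fin n)} (hPF : ∀ i j, P.Adj i.castSucc j.castSucc ↔ F.Adj i j)
    (hP : ∀ i : Fin n, P.Adj (Fin.last n) i.castSucc) :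
    IsEmpty (P ↪g G) ↔ ∀ x, ¬F ⊴ G.induce (G.neighborSet x) := by
  rw [← not_nonempty_iff, ← not_exists, not_iff_not]
  constructor
  · rintro ⟨f⟩
    let ι : F ↪g P := ⟨⟨Fin.castSucc, Fin.castSucc_injective n⟩, hPF _ _⟩
    exact ⟨f (Fin.last n), ⟨(f.comp ι).codRestrict _ fun i => f.map_adj_iff.2 (hP i)⟩⟩
  · rintro ⟨x, ⟨g⟩⟩
    obtain ⟨e, -⟩ := exists_embedding_snoc hPF ((Embedding.induce _).comp g) x
      (fun i => ((g i).2 : G.Adj x (g i)).ne') fun i => iff_of_true (g i).2.symm (hP i).symm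
    exact ⟨e⟩

end Main

end

/-- A graph is good iff it has no induced subgraph isomorphic to the gem, to `C₄ + K₁`
with a universal vertex added, to the butterfly with a universal vertex added, to `3K₂`
with a universal vertex added, or to the octahedron with a universal vertex added. -/
theorem good_iff_forbidden {V : Type*} [Fintype V] (G : SimpleGraph V) :
    Good G ↔
      (IsEmpty (gem ↪g G) ∧ IsEmpty (c4K1Universal ↪g G) ∧
       IsEmpty (butterflyUniversal ↪g G) ∧ IsEmpty (threeK2Universal ↪g G) ∧
       IsEmpty (octahedronUniversal ↪g G)) := by
  rw [isEmpty_embedding_iff_forall_neighborSet (F := p4) (by unfold gem; decide)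
      (by unfold gem; decide),
    isEmpty_embedding_iff_forall_neighborSet (F := c4K1) (by unfold c4K1Universal; decide)
      (by unfold c4K1Universal; decide),
    isEmpty_embedding_iff_forall_neighborSet (F := butterfly)
      (by unfold butterflyUniversal; decide) (by unfold butterflyUniversal; decide),
    isEmpty_embedding_iff_forall_neighborSet (F := threeK2) (by unfold threeK2Universal; decide)
      (by unfold threeK2Universal; decide),
    isEmpty_embedding_iff_forall_neighborSet (F := octahedron)
      (by unfold octahedronUniversal; decide) (by unfold octahedronUniversal; decide)]
  simp only [Good, goodVertex_iff, isThresholdUnionOrJoin_iff, forall_and]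
end

section
/- If a finite simple graph G is obtained by switching a threshold graph with respect to some set of vertices, then G is a restricted 2-threshold graph. -/
/-- The switch of `G` with respect to `S`: distinct vertices `u, v` are adjacent iff
either they are adjacent in `G` and both in `S` or both outside `S`, or they are
nonadjacent in `G` and exactly one of them is in `S`. -/
def switch {V : Type*} (G : SimpleGraph V) (S : Set V) : SimpleGraph V :=
  SimpleGraph.fromRel (fun u v =>
    (G.Adj u v ∧ ((u ∈ S ∧ v ∈ S) ∨ (u ∉ S ∧ v ∉ S))) ∨
    (¬ G.Adj u v ∧ Xor' (u ∈ S) (v ∈ S)))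

/-- `G` is a restricted 2-threshold graph: there is a black-and-white coloring `c`
(white = `true`) and a linear ordering of the vertices (given by `e : Fin n ≃ V`) such
that every vertex is adjacent to exactly the white earlier vertices or to exactly the
black earlier vertices. -/
def IsRestricted2Threshold {V : Type*} (G : SimpleGraph V) : Prop :=
  ∃ (n : ℕ) (e : Fin n ≃ V) (c : V → Bool), ∀ i : Fin n,
    (∀ j : Fin n, j < i → (G.Adj (e i) (e j) ↔ c (e j) = true)) ∨
    (∀ j : Fin n, j < i → (G.Adj (e i) (e j) ↔ c (e j) = false))

/-!
A threshold graph arises by repeatedly adding an isolated or a dominating vertex. Colour the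
vertices by membership in `S`. Switching with respect to `S` complements exactly the edges
between the two colour classes, so in the switched graph each new vertex is adjacent to exactly
the earlier vertices of one colour: its own if it was dominating, the other if it was isolated.
-/

section

variable {V : Type*} {G : SimpleGraph V}

theorem switch_adj_iff {S : Set V} {u v : V} (huv : u ≠ v) :
    (switch G S).Adj u v ↔ (G.Adj u v ↔ (u ∈ S ↔ v ∈ S)) := by
  simp only [switch, SimpleGraph.fromRel_adj, ne_eq, huv, not_false_eq_true, true_and,
    G.adj_comm v u, Xor', Xor]
  tauto

/-- The vertices are listed latest first; `d x` says whether `x` was dominating when added. -/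
theorem IsThreshold.exists_list_pairwise (hG : IsThreshold G) (W : Finset V) :
    ∃ (l : List V) (d : V → Prop), l.Nodup ∧ (∀ v, v ∈ l ↔ v ∈ W) ∧
      l.Pairwise (fun x y => G.Adj x y ↔ d x) := by
  classical
  induction W using Finset.strongInduction with
  | H W ih =>
    rcases W.eq_empty_or_nonempty with rfl | hW
    · exact ⟨[], fun _ => False, List.nodup_nil, by simp, List.Pairwise.nil⟩
    obtain ⟨x, hxW, hx⟩ := hG W (by exact_mod_cast hW)
    obtain ⟨l, d, hnd, hmem, hpw⟩ := ih (W.erase x) (Finset.erase_ssubset hxW)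
    have hxl : x ∉ l := by simp [hmem]
    have hl : ∀ y ∈ l, y ∈ (W : Set V) ∧ y ≠ x := fun y hy => by
      have := (hmem y).1 hy
      exact ⟨Finset.mem_of_mem_erase this, Finset.ne_of_mem_erase this⟩
    let dominating : Prop := ∀ y ∈ (W : Set V), y ≠ x → G.Adj x y
    refine ⟨x :: l, Function.update d x dominating, hnd.cons hxl, fun v => ?_,
      List.pairwise_cons.2 ⟨fun y hy => ?_, hpw.imp_of_mem fun ha _ h => ?_⟩⟩
    · by_cases hv : v = x <;> simp [hv, hmem, Finset.mem_coe.1 hxW]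
    · rw [Function.update_self]
      by_cases hdom : dominating
      · exact iff_of_true (hdom y (hl y hy).1 (hl y hy).2) hdom
      · exact iff_of_false (hx.resolve_right hdom y (hl y hy).1) hdom
    · rwa [Function.update_of_ne (hl _ ha).2]

theorem isRestricted2Threshold_switch_of_pairwise (S : Set V) (l : List V) (hnd : l.Nodup)
    (hl : ∀ v, v ∈ l) (d : V → Prop) (hpw : l.Pairwise (fun y x => G.Adj x y ↔ d x)) :
    IsRestricted2Threshold (switch G S) := by
  classical
  let e := hnd.getEquivOfForallMemList l hl
  refine ⟨l.length, e, fun v => decide (v ∈ S), fun i => ?_⟩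
  have hadj : ∀ j < i, (switch G S).Adj (e i) (e j) ↔ (d (e i) ↔ (e i ∈ S ↔ e j ∈ S)) :=
    fun j hj => by
      rw [switch_adj_iff (e.injective.ne hj.ne')]
      exact iff_congr (List.pairwise_iff_get.1 hpw j i hj) Iff.rfl
  by_cases hi : d (e i) ↔ e i ∈ S
  · exact Or.inl fun j hj => by rw [hadj j hj, decide_eq_true_iff]; tauto
  · exact Or.inr fun j hj => by rw [hadj j hj, decide_eq_false_iff_not]; tauto

end

/-- Switching a threshold graph with respect to any vertex set yields a restricted
2-threshold graph. -/
theorem switch_threshold_restricted2Threshold {V : Type*} [Fintype V]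
    (H : SimpleGraph V) (hH : IsThreshold H) (S : Set V) :
    IsRestricted2Threshold (switch H S) := by
  obtain ⟨l, d, hnd, hmem, hpw⟩ := hH.exists_list_pairwise Finset.univ
  exact isRestricted2Threshold_switch_of_pairwise S l.reverse (List.nodup_reverse.2 hnd)
    (fun v => List.mem_reverse.2 ((hmem v).2 (Finset.mem_univ v))) d
    (List.pairwise_reverse.2 hpw)
end

section
/- A finite simple graph is switching equivalent to a threshold graph if and only if it is a restricted 2-threshold graph. -/
section

variable {V W : Type*}

lemma switch_adj (G : SimpleGraph V) (S : Set V) (u v : V) :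
    (switch G S).Adj u v ↔ u ≠ v ∧ (G.Adj u v ↔ (u ∈ S ↔ v ∈ S)) := by
  simp only [switch, SimpleGraph.fromRel_adj, Xor', Xor]
  have := G.adj_comm u v
  tauto

lemma IsThreshold.comap {H : SimpleGraph W} (hH : IsThreshold H) {f : V → W}
    (hf : Function.Injective f) : IsThreshold (H.comap f) := by
  intro U ⟨u, hu⟩
  obtain ⟨_, ⟨z, hz, rfl⟩, hiso | huniv⟩ := hH (f '' U) ⟨f u, u, hu, rfl⟩
  · exact ⟨z, hz, Or.inl fun y hy => hiso (f y) ⟨y, hy, rfl⟩⟩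
  · exact ⟨z, hz, Or.inr fun y hy hyz => huniv (f y) ⟨y, hy, rfl⟩ (hf.ne hyz)⟩

def IsCreationOrder {n : ℕ} (H : SimpleGraph V) (e : Fin n ≃ V) : Prop :=
  ∀ i, (∀ j < i, ¬ H.Adj (e i) (e j)) ∨ (∀ j < i, H.Adj (e i) (e j))

namespace IsCreationOrder

variable {n : ℕ}

lemma isThreshold {H : SimpleGraph V} {e : Fin n ≃ V} (he : IsCreationOrder H e) :
    IsThreshold H := by
  classical
  intro U ⟨u, hu⟩
  obtain ⟨i, hiU, hmax⟩ := Finset.exists_max_image (Finset.univ.filter (e · ∈ U)) id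
    ⟨e.symm u, by simpa using hu⟩
  simp only [Finset.mem_filter, Finset.mem_univ, true_and, id] at hiU hmax
  have hlt : ∀ y ∈ U, y ≠ e i → e.symm y < i := fun y hy hyi =>
    (hmax _ (by simpa using hy)).lt_of_ne fun h => hyi (by rw [← h, e.apply_symm_apply])
  refine ⟨e i, hiU, ?_⟩
  rcases he i with hiso | huniv
  · refine Or.inl fun y hy => ?_
    by_cases hyi : y = e i
    · exact hyi ▸ H.irrefl
    · simpa using hiso _ (hlt y hy hyi)
  · exact Or.inr fun y hy hyi => by simpa using huniv _ (hlt y hy hyi)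

lemma trans_equiv {H : SimpleGraph W} (f : V ≃ W) {e : Fin n ≃ V}
    (he : IsCreationOrder (H.comap f) e) : IsCreationOrder H (e.trans f) :=
  he

lemma snoc {H : SimpleGraph V} (σ : Option W ≃ V) {e : Fin n ≃ W}
    (he : IsCreationOrder (H.comap (σ ∘ some)) e)
    (hlast : (∀ y, ¬ H.Adj (σ none) y) ∨ (∀ y ≠ σ none, H.Adj (σ none) y)) :
    IsCreationOrder H (finSuccEquivLast.trans (e.optionCongr.trans σ)) := by
  have he'_last : finSuccEquivLast.trans (e.optionCongr.trans σ) (Fin.last n) = σ none := by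
    simp only [Equiv.trans_apply, finSuccEquivLast_last, Equiv.optionCongr_apply,
      Option.map_none]
  have he'_castSucc (i : Fin n) :
      finSuccEquivLast.trans (e.optionCongr.trans σ) i.castSucc = σ (some (e i)) := by
    simp only [Equiv.trans_apply, finSuccEquivLast_castSucc, Equiv.optionCongr_apply,
      Option.map_some]
  set e' := finSuccEquivLast.trans (e.optionCongr.trans σ)
  intro i
  induction i using Fin.lastCases with
  | last =>
    rw [he'_last]
    refine hlast.imp (fun hiso j _ => hiso _) fun huniv j hj => huniv _ ?_
    rw [← he'_last]
    exact e'.injective.ne hj.ne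
  | cast i =>
    have hbefore (j : Fin (n + 1)) (hj : j < i.castSucc) :
        ∃ k < i, j = k.castSucc :=
      ⟨j.castPred (Fin.ne_last_of_lt (hj.trans_le (Fin.le_last _))),
        by rwa [← Fin.castSucc_lt_castSucc_iff, Fin.castSucc_castPred],
        (Fin.castSucc_castPred _ _).symm⟩
    refine (he i).imp (fun hiso j hj => ?_) fun huniv j hj => ?_
    all_goals
      obtain ⟨k, hk, rfl⟩ := hbefore j hj
      rw [he'_castSucc, he'_castSucc]
    exacts [hiso k hk, huniv k hk]

end IsCreationOrder

lemma IsThreshold.exists_isCreationOrder [Finite V] {H : SimpleGraph V} (hH : IsThreshold H) :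
    ∃ (n : ℕ) (e : Fin n ≃ V), IsCreationOrder H e := by
  classical
  refine Finite.induction_empty_option (P := fun V => ∀ H : SimpleGraph V, IsThreshold H →
    ∃ (n : ℕ) (e : Fin n ≃ V), IsCreationOrder H e) ?_ ?_ ?_ V H hH
  · intro V W f ih H hH
    obtain ⟨n, e, he⟩ := ih _ (hH.comap f.injective)
    exact ⟨n, e.trans f, he.trans_equiv f⟩
  · exact fun _ _ => ⟨0, Equiv.equivOfIsEmpty _ _, fun i => i.elim0⟩
  · intro V _ ih H hH
    obtain ⟨x, -, hx⟩ := hH Set.univ Set.univ_nonempty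
    let σ := Equiv.swap none x
    have hσ : σ none = x := Equiv.swap_apply_left none x
    obtain ⟨n, e, he⟩ := ih _ (hH.comap (σ.injective.comp (Option.some_injective V)))
    refine ⟨n + 1, _, he.snoc σ ?_⟩
    rw [hσ]
    exact hx.imp (fun hiso y => hiso y trivial) fun huniv y => huniv y trivial

lemma isCreationOrder_switch_iff {n : ℕ} (G : SimpleGraph V) (c : V → Bool) (e : Fin n ≃ V) :
    IsCreationOrder (switch G {v | c v = true}) e ↔ ∀ i,
      (∀ j < i, G.Adj (e i) (e j) ↔ c (e j) = true) ∨
      (∀ j < i, G.Adj (e i) (e j) ↔ c (e j) = false) := by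
  refine forall_congr' fun i => ?_
  have hswitch (j) (hj : j < i) :
      (switch G {v | c v = true}).Adj (e i) (e j) ↔ (G.Adj (e i) (e j) ↔ c (e i) = c (e j)) := by
    rw [switch_adj, and_iff_right (e.injective.ne hj.ne')]
    simp only [Set.mem_ofPred_eq]
    cases c (e i) <;> cases c (e j) <;> simp
  cases hci : c (e i)
  on_goal 2 => rw [or_comm]
  all_goals
    refine or_congr (forall₂_congr fun j hj => ?_) (forall₂_congr fun j hj => ?_) <;>
      rw [hswitch j hj, hci] <;> cases c (e j) <;> simp

end

/-- A finite simple graph is switching equivalent to a threshold graph iff it is a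
restricted 2-threshold graph. -/
theorem switchingClass_threshold_iff_restricted2Threshold {V : Type*} [Fintype V]
    (G : SimpleGraph V) :
    (∃ S : Set V, IsThreshold (switch G S)) ↔ IsRestricted2Threshold G := by
  classical
  constructor
  · rintro ⟨S, hS⟩
    obtain ⟨n, e, he⟩ := hS.exists_isCreationOrder
    refine ⟨n, e, fun v => decide (v ∈ S), (isCreationOrder_switch_iff G (fun v => decide (v ∈ S)) e).1 ?_⟩
    simpa using he
  · rintro ⟨n, e, c, hc⟩
    exact ⟨_, ((isCreationOrder_switch_iff G c e).2 hc).isThreshold⟩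
end

section
/- For every natural number k, a finite simple graph G is a k-threshold graph if and only if there is a coloring of its vertices with k colors and a linear ordering v_1, …, v_n of its vertices such that for each i ≥ 2, either v_i is nonadjacent to all of v_1, …, v_{i−1}, or there is a color j such that v_i is adjacent to exactly the vertices of color j among v_1, …, v_{i−1}. -/
section EliminationOrder

variable {V : Type*} {P : Set V → V → Prop}

theorem Finset.exists_fin_enum_forall_prefix
    (hP : ∀ S : Set V, S.Nonempty → ∃ x ∈ S, P S x) (S : Finset V) :
    ∃ e : Fin S.card → V, Set.range e = S ∧ ∀ i, P (e '' Set.Iic i) (e i) := by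
  classical
  induction hn : S.card generalizing S with
  | zero => exact ⟨Fin.elim0, by simp_all [Set.range_eq_empty], fun i => i.elim0⟩
  | succ n ih =>
    obtain ⟨x, hxS, hx⟩ := hP S (by simp [← Finset.card_pos, hn])
    obtain ⟨e, he_range, he⟩ := ih (S.erase x) (by simp [Finset.card_erase_of_mem hxS, hn])
    have h_prefix (i : Fin n) : Fin.snoc e x '' Set.Iic i.castSucc = e '' Set.Iic i := by
      rw [← Fin.image_castSucc_Iic, Set.image_image]
      simp only [Fin.snoc_castSucc]
    have h_range : Set.range (Fin.snoc e x : Fin (n + 1) → V) = S := by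
      rw [Fin.range_snoc, he_range, Finset.coe_erase, Set.insert_sdiff_singleton,
        Set.insert_eq_of_mem hxS]
    refine ⟨Fin.snoc e x, h_range, Fin.lastCases ?_ fun i => ?_⟩
    · rwa [show Set.Iic (Fin.last n) = Set.univ from Set.Iic_top, Set.image_univ, h_range,
        Fin.snoc_last]
    · simpa [h_prefix] using he i

theorem exists_equiv_fin_forall_prefix [Fintype V]
    (hP : ∀ S : Set V, S.Nonempty → ∃ x ∈ S, P S x) :
    ∃ (n : ℕ) (e : Fin n ≃ V), ∀ i, P (e '' Set.Iic i) (e i) := by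
  obtain ⟨e, he_range, he⟩ := Finset.univ.exists_fin_enum_forall_prefix hP
  have he_bij : e.Bijective :=
    (Set.range_eq_univ.mp (by simpa using he_range)).bijective_of_nat_card_le (by simp)
  exact ⟨_, .ofBijective e he_bij, he⟩

theorem exists_mem_of_forall_prefix {ι : Type*} [LinearOrder ι] [Finite ι]
    (hP : ∀ ⦃S T x⦄, S ⊆ T → P T x → P S x) (e : ι ≃ V)
    (he : ∀ i, P (e '' Set.Iic i) (e i)) {S : Set V} (hS : S.Nonempty) :
    ∃ x ∈ S, P S x := by
  have : Finite V := .of_equiv ι e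
  obtain ⟨x, hxS, hx_max⟩ := S.exists_max_image e.symm S.toFinite hS
  have hS_prefix : S ⊆ e '' Set.Iic (e.symm x) :=
    fun y hy => ⟨e.symm y, hx_max y hy, e.apply_symm_apply y⟩
  exact ⟨x, hxS, hP hS_prefix (by simpa using he (e.symm x))⟩

end EliminationOrder

namespace SimpleGraph

variable {V : Type*} {k : ℕ} (G : SimpleGraph V)

def IsThresholdVertex (c : V → Fin k) (W : Set V) (x : V) : Prop :=
  (∀ y ∈ W, ¬ G.Adj x y) ∨ ∃ i : Fin k, ∀ y ∈ W, y ≠ x → (G.Adj x y ↔ c y = i)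

variable {G}

theorem IsThresholdVertex.mono {c : V → Fin k} {S T : Set V} {x : V} (hST : S ⊆ T)
    (hx : G.IsThresholdVertex c T x) : G.IsThresholdVertex c S x :=
  hx.imp (fun h y hy => h y (hST hy)) fun ⟨i, hi⟩ => ⟨i, fun y hy => hi y (hST hy)⟩

theorem isThresholdVertex_image_Iic_iff {ι : Type*} [PartialOrder ι] (c : V → Fin k)
    (e : ι ≃ V) (i : ι) :
    G.IsThresholdVertex c (e '' Set.Iic i) (e i) ↔
      (∀ j, j < i → ¬ G.Adj (e i) (e j)) ∨
        ∃ m : Fin k, ∀ j, j < i → (G.Adj (e i) (e j) ↔ c (e j) = m) := by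
  simp only [IsThresholdVertex, Set.forall_mem_image, Set.mem_Iic, ne_eq, e.apply_eq_iff_eq,
    le_iff_lt_or_eq, or_imp, forall_and]
  simp +contextual [LT.lt.ne]

end SimpleGraph

/-- A finite simple graph `G` is a `k`-threshold graph iff there is a coloring of its
vertices with `k` colors and a linear ordering of the vertices (given by `e : Fin n ≃ V`)
such that every vertex is either nonadjacent to all earlier vertices, or adjacent to
exactly the earlier vertices of some color `j`. -/
theorem kThreshold_iff_elimination_order {V : Type*} [Fintype V] (k : ℕ)
    (G : SimpleGraph V) :
    IsKThreshold k G ↔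
      ∃ (n : ℕ) (e : Fin n ≃ V) (c : V → Fin k), ∀ i : Fin n,
        (∀ j : Fin n, j < i → ¬ G.Adj (e i) (e j)) ∨
        ∃ m : Fin k, ∀ j : Fin n, j < i → (G.Adj (e i) (e j) ↔ c (e j) = m) := by
  simp only [← SimpleGraph.isThresholdVertex_image_Iic_iff]
  constructor
  · rintro ⟨c, hc⟩
    obtain ⟨n, e, he⟩ := exists_equiv_fin_forall_prefix (P := G.IsThresholdVertex c) hc
    exact ⟨n, e, c, he⟩
  · rintro ⟨n, e, c, he⟩
    exact ⟨c, fun W => exists_mem_of_forall_prefix (P := G.IsThresholdVertex c)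
      (fun _ _ _ => SimpleGraph.IsThresholdVertex.mono) e he⟩
end
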